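/- arXiv:1810.04198 — 5 statements merged into one kernel-verified Lean document; each statement's English description precedes it below -/
import Mathlib

section
/- Let p be a prime not dividing the order of the Weyl group W of Φ. Then p is not a bad prime for Φ̌: for every subset Ψ̌ ⊆ Φ̌ that is closed in Φ̌ (i.e., (ℤ-span of Ψ̌) ∩ Φ̌ = Ψ̌), the quotient (ℤ-span of Φ̌)/(ℤ-span of Ψ̌) has no p-torsion; concretely, if v lies in the ℤ-span of Φ̌ and p·v lies in the ℤ-span of Ψ̌, then v lies in the ℤ-span of Ψ̌. -/
/-!
Let `W_Ψ ≤ W` be the subgroup generated by the reflections `s_α` with `α̌ ∈ Ψ`, acting on `V'`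
contragrediently, so that `s_α` acts by `f ↦ f - ⟨α, f⟩ α̌`. Its generators move every point of
`ℤΦ̌` by an element of `ℤΨ`, hence so does every `w ∈ W_Ψ`, and summing gives
`|W_Ψ| • v - ∑_w w v ∈ ℤΨ` for `v ∈ ℤΦ̌`. If moreover `p • v ∈ ℤΨ`, then `v ∈ ℚΨ`, and the
sum `∑_w w` kills `ℚΨ` because each `α̌ ∈ Ψ` is negated by `s_α`. So `|W_Ψ| • v ∈ ℤΨ`, and
as `|W_Ψ|` divides `|W|` it is prime to `p`.
-/

open Submodule

theorem Submodule.mem_of_smul_mem_of_isCoprime {R E : Type*} [CommSemiring R] [AddCommMonoid E]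
    [Module R E] {M : Submodule R E} {a b : R} {v : E} (hab : IsCoprime a b) (ha : a • v ∈ M)
    (hb : b • v ∈ M) : v ∈ M := by
  obtain ⟨u, w, h⟩ := hab
  rw [← one_smul R v, ← h, add_smul, mul_smul, mul_smul]
  exact M.add_mem (M.smul_mem u ha) (M.smul_mem w hb)

theorem Submodule.mem_span_of_zsmul_mem_span_int {K E : Type*} [DivisionRing K] [CharZero K]
    [AddCommGroup E] [Module K E] {X : Set E} {n : ℤ} (hn : n ≠ 0) {v : E}
    (h : n • v ∈ span ℤ X) : v ∈ span K X := by
  have := span_le_restrictScalars ℤ K X h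
  rwa [restrictScalars_mem, ← Int.cast_smul_eq_zsmul K, smul_mem_iff _ (Int.cast_ne_zero.2 hn)]
    at this

theorem AddMonoidHom.exists_intCast_eq_of_mem_span {E : Type*} [AddCommGroup E] (φ : E →+ ℚ)
    {X : Set E} (hX : ∀ x ∈ X, ∃ n : ℤ, φ x = n) {f : E} (hf : f ∈ span ℤ X) :
    ∃ n : ℤ, φ f = n := by
  have h : span ℤ X ≤ (Algebra.linearMap ℤ ℚ).range.comap φ.toIntLinearMap :=
    span_le.2 fun x hx => (hX x hx).imp fun _ hn => hn.symm
  exact (h hf).imp fun _ hn => hn.symm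

namespace Representation

variable {k Γ E : Type*} [CommSemiring k] [Group Γ] [AddCommGroup E] [Module k E]
  (ρ : Representation k Γ E)

theorem sub_mem_of_mem_closure {S : Set Γ} (hS_inv : ∀ s ∈ S, s⁻¹ ∈ S)
    {L M : Submodule ℤ E} (hML : M ≤ L) (hS : ∀ s ∈ S, ∀ f ∈ L, f - ρ s f ∈ M) {g : Γ}
    (hg : g ∈ Subgroup.closure S) : ∀ f ∈ L, f - ρ g f ∈ M := by
  induction hg using Subgroup.closure_induction'' with
  | mem s hs => exact hS s hs
  | inv_mem s hs => exact hS s⁻¹ (hS_inv s hs)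
  | one => simp
  | mul g h _ _ ihg ihh =>
    intro f hf
    have hhf : ρ h f ∈ L := by simpa using L.sub_mem hf (hML (ihh f hf))
    have hsplit : f - ρ (g * h) f = (f - ρ h f) + (ρ h f - ρ g (ρ h f)) := by
      simp only [map_mul, Module.End.mul_apply]
      abel
    exact hsplit ▸ M.add_mem (ihh f hf) (ihg _ hhf)

variable [Fintype Γ]

theorem card_smul_sub_sum_mem {M : Submodule ℤ E} {v : E} (hv : ∀ g, v - ρ g v ∈ M) :
    (Nat.card Γ : ℤ) • v - ∑ g, ρ g v ∈ M := by
  rw [Nat.card_eq_fintype_card, natCast_zsmul, ← Finset.card_univ, ← Finset.sum_const,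
    ← Finset.sum_sub_distrib]
  exact M.sum_mem fun g _ => hv g

theorem sum_apply_eq_zero_of_mem_span [IsAddTorsionFree E] {X : Set E}
    (hX : ∀ x ∈ X, ∃ g, ρ g x = -x) {v : E} (hv : v ∈ span k X) : ∑ g, ρ g v = 0 := by
  have hker : X ⊆ LinearMap.ker (∑ g, ρ g) := by
    intro x hx
    obtain ⟨g, hg⟩ := hX x hx
    have hneg : ∑ h, ρ h x = -∑ h, ρ h x := calc
      ∑ h, ρ h x = ∑ h, ρ (h * g) x := (Fintype.sum_equiv (Equiv.mulRight g) _ _ fun _ => rfl).symm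
      _ = -∑ h, ρ h x := by simp [hg]
    simpa [self_eq_neg] using hneg
  simpa using span_le.2 hker hv

end Representation

namespace LinearMap

variable {R V V' : Type*} [CommRing R] [AddCommGroup V] [Module R V] [AddCommGroup V']
  [Module R V'] (P : V →ₗ[R] V' →ₗ[R] R) [P.IsPerfPair]

noncomputable def contragredient : Representation R (V ≃ₗ[R] V) V' :=
  (P.flip.toPerfPair.symm.conjAlgEquiv R).toMonoidHom.comp
    (Representation.dual LinearEquiv.automorphismGroup.toLinearMapMonoidHom)

@[simp]
theorem apply_contragredient (w : V ≃ₗ[R] V) (x : V) (f : V') :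
    P x (P.contragredient w f) = P (w.symm x) f :=
  P.apply_toPerfPair_flip _ x

theorem ext_of_isPerfPair {f g : V'} (h : ∀ x, P x f = P x g) : f = g :=
  (IsPerfPair.bijective_right P).injective (LinearMap.ext h)

theorem contragredient_reflection_apply {α : V} {c : V'} (h : P.flip c α = 2) (f : V') :
    P.contragredient (Module.reflection h) f = f - P α f • c :=
  P.ext_of_isPerfPair fun x => by
    rw [apply_contragredient, Module.reflection_symm, Module.reflection_apply]
    simp [mul_comm]

theorem sub_contragredient_reflection_apply_mem {α : V} {c : V'} (h : P.flip c α = 2)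
    {M : Submodule ℤ V'} (hc : c ∈ M) {f : V'} (hf : ∃ n : ℤ, P α f = n) :
    f - P.contragredient (Module.reflection h) f ∈ M := by
  obtain ⟨n, hn⟩ := hf
  rw [contragredient_reflection_apply, sub_sub_cancel, hn, Int.cast_smul_eq_zsmul]
  exact M.smul_mem n hc

end LinearMap

theorem not_bad_prime_of_not_dvd_weyl_order_general
    {V V' : Type*} [AddCommGroup V] [Module ℚ V] [AddCommGroup V'] [Module ℚ V']
    (P : V →ₗ[ℚ] V' →ₗ[ℚ] ℚ) [P.IsPerfPair]
    (Φ : Set V) (coroot : V → V')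
    (h2 : ∀ α ∈ Φ, P α (coroot α) = 2)
    (hcrys : ∀ α ∈ Φ, ∀ β ∈ Φ, ∃ n : ℤ, P β (coroot α) = (n : ℚ))
    (s : V → (V ≃ₗ[ℚ] V))
    (hs_def : ∀ α ∈ Φ, ∀ v : V, s α v = v - (P v (coroot α)) • α)
    (p : ℕ) (hp : p.Prime)
    (hpW : ¬ p ∣ Nat.card ↥(Subgroup.closure (s '' Φ)))
    (Ψ : Set V') (hΨ : Ψ ⊆ coroot '' Φ) :
    ∀ v ∈ Submodule.span ℤ (coroot '' Φ),
      (p : ℤ) • v ∈ Submodule.span ℤ Ψ → v ∈ Submodule.span ℤ Ψ := by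
  intro v hv hpv
  have h2' (α : V) (hα : α ∈ Φ) : P.flip (coroot α) α = 2 := h2 α hα
  have hs (α : V) (hα : α ∈ Φ) : s α = Module.reflection (h2' α hα) := LinearEquiv.ext (hs_def α hα)
  set K := Subgroup.closure (s '' {α ∈ Φ | coroot α ∈ Ψ})
  have hpK : ¬ p ∣ Nat.card K := fun h => hpW <| h.trans <|
    Subgroup.card_dvd_of_le <| Subgroup.closure_mono <| Set.image_mono fun _ => And.left
  have : Finite K := Nat.finite_of_card_ne_zero fun h => hpK (h ▸ dvd_zero p)
  have := Fintype.ofFinite K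
  have := IsAddTorsionFree.of_module_rat V'
  have hmove : ∀ g ∈ K, v - P.contragredient g v ∈ span ℤ Ψ := by
    refine fun g hg => P.contragredient.sub_mem_of_mem_closure ?_ (span_mono hΨ) ?_ hg v hv
    · rintro _ ⟨α, hα, rfl⟩
      exact ⟨α, hα, by rw [hs α hα.1, Module.reflection_inv]⟩
    · rintro _ ⟨α, ⟨hα, hαΨ⟩, rfl⟩ f hf
      rw [hs α hα]
      exact P.sub_contragredient_reflection_apply_mem _ (subset_span hαΨ)
        ((P α).toAddMonoidHom.exists_intCast_eq_of_mem_span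
          (by rintro _ ⟨β, hβ, rfl⟩; exact hcrys β hβ α hα) hf)
  have hsum : ∑ g : K, P.contragredient g v = 0 := by
    refine Representation.sum_apply_eq_zero_of_mem_span (P.contragredient.comp K.subtype) ?_
      (mem_span_of_zsmul_mem_span_int (by exact_mod_cast hp.ne_zero) hpv)
    intro ψ hψ
    obtain ⟨α, hα, rfl⟩ := hΨ hψ
    refine ⟨⟨s α, Subgroup.subset_closure ⟨α, ⟨hα, hψ⟩, rfl⟩⟩, ?_⟩
    simp [hs α hα, P.contragredient_reflection_apply, h2 α hα, two_smul]
  have hNv : (Nat.card K : ℤ) • v ∈ span ℤ Ψ := by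
    simpa [hsum] using Representation.card_smul_sub_sum_mem (P.contragredient.comp K.subtype)
      fun g => hmove g g.2
  exact mem_of_smul_mem_of_isCoprime (Nat.isCoprime_iff_coprime.2 (hp.coprime_iff_not_dvd.2 hpK))
    hpv hNv

/-- Let `Φ` be a finite, reduced, crystallographic root system with Weyl group
`W = ⟨s α : α ∈ Φ⟩`, and let `p` be a prime not dividing `|W|`.  Then `p` is not a bad prime for
the coroot system `Φ̌`: for every subset `Ψ ⊆ Φ̌` that is closed in `Φ̌`
(i.e. `ℤΨ ∩ Φ̌ = Ψ`), the quotient `ℤΦ̌ / ℤΨ` has no `p`-torsion; concretely, if `v ∈ ℤΦ̌` and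
`p • v ∈ ℤΨ`, then `v ∈ ℤΨ`. -/
theorem not_bad_prime_of_not_dvd_weyl_order
    {V V' : Type*} [AddCommGroup V] [Module ℚ V] [AddCommGroup V'] [Module ℚ V']
    [FiniteDimensional ℚ V] [FiniteDimensional ℚ V']
    (P : V →ₗ[ℚ] V' →ₗ[ℚ] ℚ) [P.IsPerfPair]
    (Φ : Set V) (hfin : Φ.Finite) (coroot : V → V')
    (h2 : ∀ α ∈ Φ, P α (coroot α) = 2)
    (hcrys : ∀ α ∈ Φ, ∀ β ∈ Φ, ∃ n : ℤ, P β (coroot α) = (n : ℚ))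
    (hred : ∀ α ∈ Φ, ∀ c : ℚ, c • α ∈ Φ → c = 1 ∨ c = -1)
    (s : V → (V ≃ₗ[ℚ] V))
    (hs_def : ∀ α ∈ Φ, ∀ v : V, s α v = v - (P v (coroot α)) • α)
    (hs_perm : ∀ α ∈ Φ, ∀ β ∈ Φ, s α β ∈ Φ)
    (p : ℕ) (hp : p.Prime)
    (hpW : ¬ p ∣ Nat.card ↥(Subgroup.closure (s '' Φ)))
    (Ψ : Set V') (hΨ : Ψ ⊆ coroot '' Φ)
    (hclosed : (Submodule.span ℤ Ψ : Set V') ∩ (coroot '' Φ) = Ψ) :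
    ∀ v ∈ Submodule.span ℤ (coroot '' Φ),
      (p : ℤ) • v ∈ Submodule.span ℤ Ψ → v ∈ Submodule.span ℤ Ψ :=
  not_bad_prime_of_not_dvd_weyl_order_general P Φ coroot h2 hcrys s hs_def p hp hpW Ψ hΨ
end

section
/- Let p be a prime not dividing the order of the Weyl group W of Φ. Let Δ be a base of Φ, let Θ ⊆ Δ, and let Φ_Θ = Φ ∩ (ℤ-span of Θ) with coroots Φ̌_Θ = {α̌ : α ∈ Φ_Θ}. Then the weight lattice P(Φ_Θ) = {v ∈ ℚ-span of Φ_Θ : ⟨v, α̌⟩ ∈ ℤ for all α ∈ Φ_Θ} contains the root lattice Q(Φ_Θ) = ℤ-span of Φ_Θ as a subgroup of finite index (the index of connection of Φ_Θ), and p does not divide this index. -/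
/-- The weight lattice of the (sub)system with roots `S`: the elements of the `ℚ`-span of `S`
pairing integrally (via `B`) with every coroot `coroot α`, `α ∈ S`. -/
def weightLattice {V V' : Type*} [AddCommGroup V] [Module ℚ V] [AddCommGroup V'] [Module ℚ V']
    (B : V →ₗ[ℚ] V' →ₗ[ℚ] ℚ) (coroot : V → V') (S : Set V) : AddSubgroup V where
  carrier := {v | v ∈ Submodule.span ℚ S ∧ ∀ α ∈ S, ∃ n : ℤ, B v (coroot α) = (n : ℚ)}
  zero_mem' := ⟨Submodule.zero_mem _, fun α _ => ⟨0, by simp⟩⟩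
  add_mem' := by
    rintro a b ⟨ha, ha'⟩ ⟨hb, hb'⟩
    refine ⟨Submodule.add_mem _ ha hb, fun α hα => ?_⟩
    obtain ⟨n, hn⟩ := ha' α hα
    obtain ⟨m, hm⟩ := hb' α hα
    exact ⟨n + m, by rw [map_add, LinearMap.add_apply, hn, hm]; push_cast; ring⟩
  neg_mem' := by
    rintro a ⟨ha, ha'⟩
    refine ⟨Submodule.neg_mem _ ha, fun α hα => ?_⟩
    obtain ⟨n, hn⟩ := ha' α hα
    exact ⟨-n, by rw [map_neg, LinearMap.neg_apply, hn]; push_cast; ring⟩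

/-- A perfect pairing of two (left) modules (the structure of Mathlib of December 2024, since removed). -/
structure PerfectPairing (R M N : Type*) [CommRing R] [AddCommGroup M] [Module R M]
    [AddCommGroup N] [Module R N] where
  toLin : M →ₗ[R] N →ₗ[R] R
  bijectiveLeft : Function.Bijective toLin
  bijectiveRight : Function.Bijective toLin.flip

/-!
Let `S = Φ_Θ`, let `W_S` be the group generated by the reflections in `S` and `N = |W_S|`, a divisor
of `|W|`. For a weight `λ`, every `w λ - λ` with `w ∈ W_S` lies in the root lattice: for a single
reflection it is `-⟨λ, α̌⟩ α`. The orbit sum `∑_w w λ` lies in `ℚS` and is `W_S`-fixed; for a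
`W_S`-invariant positive definite form it is orthogonal to each `α ∈ S` (as `s_α α = -α`), hence
zero. So `N λ = -∑_w (w λ - λ)` lies in the root lattice: `P/Q` is a finitely generated abelian
group killed by `N`, its order divides a power of `N`, and `p` does not divide it.
-/

theorem Module.Basis.toDual_self {ι R M : Type*} [DecidableEq ι] [CommSemiring R] [AddCommMonoid M]
    [Module R M] (b : Module.Basis ι R M) (x : M) :
    b.toDual x x = (b.repr x).sum fun _ c => c * c := by
  conv_lhs => arg 2; rw [← b.linearCombination_repr x]
  simp only [Finsupp.linearCombination_apply, map_finsuppSum, map_smul, b.toDual_apply_left,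
    smul_eq_mul]
  exact Finsupp.sum_congr fun i _ => mul_comm _ _

section PositiveDefiniteForm

variable {K V : Type*} [Field K] [LinearOrder K] [IsStrictOrderedRing K] [AddCommGroup V]
  [Module K V]

theorem exists_posDef_bilin :
    ∃ F : V →ₗ[K] V →ₗ[K] K, (∀ x, 0 ≤ F x x) ∧ ∀ x, F x x = 0 → x = 0 := by
  classical
  let b := Module.Basis.ofVectorSpace K V
  refine ⟨b.toDual, fun x => ?_, fun x hx => ?_⟩
  · rw [b.toDual_self]
    exact Finset.sum_nonneg fun i _ => mul_self_nonneg _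
  · rw [b.toDual_self, Finsupp.sum,
      Finset.sum_eq_zero_iff_of_nonneg fun i _ => mul_self_nonneg _] at hx
    exact b.repr.map_eq_zero_iff.mp (Finsupp.ext fun i => by
      by_contra h
      exact h (mul_self_eq_zero.mp (hx i (Finsupp.mem_support_iff.mpr h))))

theorem Subgroup.exists_invariant_posDef_bilin (W : Subgroup (V ≃ₗ[K] V)) [Finite W] :
    ∃ G : V →ₗ[K] V →ₗ[K] K, (∀ x, 0 ≤ G x x) ∧ (∀ x, G x x = 0 → x = 0) ∧
      ∀ g ∈ W, ∀ x y, G (g x) (g y) = G x y := by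
  have := Fintype.ofFinite W
  obtain ⟨F, hF_nonneg, hF_definite⟩ := exists_posDef_bilin (K := K) (V := V)
  have hG : ∀ x y, (∑ w : W, F.compl₁₂ (w : V →ₗ[K] V) (w : V →ₗ[K] V)) x y =
      ∑ w : W, F ((w : V ≃ₗ[K] V) x) ((w : V ≃ₗ[K] V) y) := by
    simp [LinearMap.sum_apply]
  refine ⟨∑ w : W, F.compl₁₂ (w : V →ₗ[K] V) (w : V →ₗ[K] V), fun x => ?_, fun x hx => ?_,
    fun g hg x y => ?_⟩
  · rw [hG]
    exact Finset.sum_nonneg fun w _ => hF_nonneg _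
  · rw [hG, Finset.sum_eq_zero_iff_of_nonneg fun w _ => hF_nonneg _] at hx
    exact hF_definite x (hx 1 (Finset.mem_univ _))
  · rw [hG, hG]
    exact Fintype.sum_equiv (Equiv.mulRight ⟨g, hg⟩) _ _ fun w => rfl

end PositiveDefiniteForm

namespace AddSubgroup

variable {M : Type*} [AddCommGroup M] {H K : AddSubgroup M} {n : ℕ}

theorem fg_of_forall_nsmul_mem [IsAddTorsionFree M] [AddGroup.FG H] (hn : n ≠ 0)
    (h : ∀ x ∈ K, n • x ∈ H) : AddGroup.FG K := by
  let f : K →+ H :=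
    { toFun := fun x => ⟨n • (x : M), h x x.2⟩
      map_zero' := by ext; simp
      map_add' := fun x y => by ext; simp }
  have hf : Function.Injective f := fun x y hxy =>
    Subtype.ext (nsmul_right_injective hn (congrArg Subtype.val hxy))
  have : Module.Finite ℤ H := Module.Finite.iff_addGroup_fg.mpr inferInstance
  exact Module.Finite.iff_addGroup_fg.mp (Module.Finite.of_injective f.toIntLinearMap hf)

theorem index_addSubgroupOf_dvd_pow_of_forall_nsmul_mem [AddGroup.FG K]
    (h : ∀ x ∈ K, n • x ∈ H) :
    (H.addSubgroupOf K).index ∣ n ^ AddGroup.rank (K ⧸ H.addSubgroupOf K) := by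
  have : AddGroup.FG (K ⧸ H.addSubgroupOf K) :=
    AddGroup.fg_of_surjective (QuotientAddGroup.mk'_surjective _)
  refine card_dvd_exponent_nsmul_rank' _ fun x => ?_
  induction x using QuotientAddGroup.induction_on with
  | H x =>
    rw [← QuotientAddGroup.mk_nsmul, QuotientAddGroup.eq_zero_iff, mem_addSubgroupOf]
    exact h x x.2

end AddSubgroup

theorem Module.eq_reflection_of_forall_apply {R M N : Type*} [CommRing R] [AddCommGroup M]
    [Module R M] [AddCommGroup N] [Module R N] {B : M →ₗ[R] N →ₗ[R] R} {α : M} {α' : N}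
    {σ : M ≃ₗ[R] M} (h2 : B.flip α' α = 2) (hσ : ∀ v, σ v = v - B v α' • α) :
    σ = Module.reflection h2 :=
  LinearEquiv.ext hσ

theorem Subgroup.apply_sum_eq_sum {R V : Type*} [Semiring R] [AddCommMonoid V] [Module R V]
    (W : Subgroup (V ≃ₗ[R] V)) [Fintype W] {g : V ≃ₗ[R] V} (hg : g ∈ W) (v : V) :
    g (∑ w : W, (w : V ≃ₗ[R] V) v) = ∑ w : W, (w : V ≃ₗ[R] V) v := by
  rw [map_sum]
  exact Fintype.sum_equiv (Equiv.mulLeft ⟨g, hg⟩) _ _ fun w => rfl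

theorem Subgroup.eq_zero_of_mem_span_of_forall_apply_eq {K V : Type*} [Field K] [LinearOrder K]
    [IsStrictOrderedRing K] [AddCommGroup V] [Module K V] (W : Subgroup (V ≃ₗ[K] V)) [Finite W]
    {S : Set V} (hS : ∀ α ∈ S, ∃ g ∈ W, g α = -α) {u : V} (hu : u ∈ Submodule.span K S)
    (hfix : ∀ g ∈ W, g u = u) : u = 0 := by
  obtain ⟨G, -, hG_definite, hG_inv⟩ := W.exists_invariant_posDef_bilin
  have hGα : ∀ α ∈ S, G u α = 0 := fun α hα => by
    obtain ⟨g, hg, hgα⟩ := hS α hα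
    have := hG_inv g hg u α
    rw [hfix g hg, hgα, map_neg] at this
    linarith
  exact hG_definite u ((Submodule.span_le (p := LinearMap.ker (G u)) |>.mpr hGα) hu)

section WeylGroup

variable {V V' : Type*} [AddCommGroup V] [Module ℚ V] [AddCommGroup V'] [Module ℚ V']
  {B : V →ₗ[ℚ] V' →ₗ[ℚ] ℚ} {coroot : V → V'} {s : V → V ≃ₗ[ℚ] V} {S : Set V}

theorem span_int_le_weightLattice (hcrys : ∀ α ∈ S, ∀ β ∈ S, ∃ n : ℤ, B β (coroot α) = n) :
    (Submodule.span ℤ S).toAddSubgroup ≤ weightLattice B coroot S := fun _ hv =>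
  (Submodule.span_le (p := (weightLattice B coroot S).toIntSubmodule)).mpr
    (fun α hα => ⟨Submodule.subset_span hα, fun β hβ => hcrys β hβ α hα⟩) hv

variable (h2 : ∀ α ∈ S, B α (coroot α) = 2)
  (hcrys : ∀ α ∈ S, ∀ β ∈ S, ∃ n : ℤ, B β (coroot α) = n)
  (hs : ∀ α ∈ S, ∀ v, s α v = v - B v (coroot α) • α)
include h2 hcrys hs

theorem sub_mem_span_int_of_mem_closure {g : V ≃ₗ[ℚ] V} (hg : g ∈ Subgroup.closure (s '' S))
    {v : V} (hv : v ∈ weightLattice B coroot S) : g v - v ∈ Submodule.span ℤ S := by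
  have hinv : ∀ α ∈ S, (s α)⁻¹ = s α := fun α hα => by
    rw [Module.eq_reflection_of_forall_apply (h2 α hα) (hs α hα)]
    exact Module.reflection_inv _
  have hgen : ∀ α ∈ S, ∀ x ∈ weightLattice B coroot S, s α x - x ∈ Submodule.span ℤ S := by
    intro α hα x hx
    obtain ⟨m, hm⟩ := hx.2 α hα
    rw [hs α hα, hm, sub_sub_cancel_left, Int.cast_smul_eq_zsmul]
    exact neg_mem (Submodule.smul_mem _ m (Submodule.subset_span hα))
  induction hg using Subgroup.closure_induction'' generalizing v with
  | mem _ hx =>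
    obtain ⟨α, hα, rfl⟩ := hx
    exact hgen α hα v hv
  | inv_mem _ hx =>
    obtain ⟨α, hα, rfl⟩ := hx
    rw [hinv α hα]
    exact hgen α hα v hv
  | one => simp
  | mul x y _ _ ihx ihy =>
    have hyv : y v ∈ weightLattice B coroot S := by
      simpa using add_mem (span_int_le_weightLattice hcrys (ihy hv)) hv
    rw [LinearEquiv.mul_apply, ← sub_add_sub_cancel _ (y v)]
    exact add_mem (ihx hyv) (ihy hv)

theorem apply_mem_weightLattice {g : V ≃ₗ[ℚ] V} (hg : g ∈ Subgroup.closure (s '' S)) {v : V}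
    (hv : v ∈ weightLattice B coroot S) : g v ∈ weightLattice B coroot S := by
  simpa using add_mem (span_int_le_weightLattice hcrys
    (sub_mem_span_int_of_mem_closure h2 hcrys hs hg hv)) hv

theorem natCard_nsmul_mem_span_int [Finite (Subgroup.closure (s '' S))] {l : V}
    (hl : l ∈ weightLattice B coroot S) :
    Nat.card (Subgroup.closure (s '' S)) • l ∈ Submodule.span ℤ S := by
  set W := Subgroup.closure (s '' S)
  have := Fintype.ofFinite W
  have hreflect : ∀ α ∈ S, ∃ g ∈ W, g α = -α := fun α hα =>
    ⟨s α, Subgroup.subset_closure ⟨α, hα, rfl⟩, by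
      rw [Module.eq_reflection_of_forall_apply (h2 α hα) (hs α hα)]
      exact Module.reflection_apply_self _⟩
  have horbit_sum : ∑ w : W, (w : V ≃ₗ[ℚ] V) l = 0 :=
    W.eq_zero_of_mem_span_of_forall_apply_eq hreflect
      (Submodule.sum_mem _ fun w _ => (apply_mem_weightLattice h2 hcrys hs w.2 hl).1)
      fun g hg => W.apply_sum_eq_sum hg l
  have hdiff : ∑ w : W, ((w : V ≃ₗ[ℚ] V) l - l) ∈ Submodule.span ℤ S :=
    Submodule.sum_mem _ fun w _ => sub_mem_span_int_of_mem_closure h2 hcrys hs w.2 hl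
  rwa [Finset.sum_sub_distrib, horbit_sum, Finset.sum_const, Finset.card_univ,
    ← Nat.card_eq_fintype_card, zero_sub, neg_mem_iff] at hdiff

end WeylGroup

theorem index_of_connection_not_dvd_general
    {V V' : Type*} [AddCommGroup V] [Module ℚ V] [AddCommGroup V'] [Module ℚ V']
    (P : PerfectPairing ℚ V V')
    (Φ : Set V) (hfin : Φ.Finite) (coroot : V → V')
    (h2 : ∀ α ∈ Φ, P.toLin α (coroot α) = 2)
    (hcrys : ∀ α ∈ Φ, ∀ β ∈ Φ, ∃ n : ℤ, P.toLin β (coroot α) = (n : ℚ))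
    (s : V → (V ≃ₗ[ℚ] V))
    (hs_def : ∀ α ∈ Φ, ∀ v : V, s α v = v - (P.toLin v (coroot α)) • α)
    (p : ℕ) (hp : p.Prime)
    (hpW : ¬ p ∣ Nat.card ↥(Subgroup.closure (s '' Φ)))
    (Θ : Set V) :
    (Submodule.span ℤ (Φ ∩ (Submodule.span ℤ Θ : Set V))).toAddSubgroup ≤
        weightLattice P.toLin coroot (Φ ∩ (Submodule.span ℤ Θ : Set V)) ∧
    ((Submodule.span ℤ (Φ ∩ (Submodule.span ℤ Θ : Set V))).toAddSubgroup.addSubgroupOf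
        (weightLattice P.toLin coroot (Φ ∩ (Submodule.span ℤ Θ : Set V)))).index ≠ 0 ∧
    ¬ p ∣ ((Submodule.span ℤ (Φ ∩ (Submodule.span ℤ Θ : Set V))).toAddSubgroup.addSubgroupOf
        (weightLattice P.toLin coroot (Φ ∩ (Submodule.span ℤ Θ : Set V)))).index := by
  set S := Φ ∩ (Submodule.span ℤ Θ : Set V)
  have hS2 : ∀ α ∈ S, P.toLin α (coroot α) = 2 := fun α hα => h2 α hα.1
  have hScrys : ∀ α ∈ S, ∀ β ∈ S, ∃ n : ℤ, P.toLin β (coroot α) = n :=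
    fun α hα β hβ => hcrys α hα.1 β hβ.1
  have hSs : ∀ α ∈ S, ∀ v, s α v = v - P.toLin v (coroot α) • α := fun α hα => hs_def α hα.1
  have hWS : Subgroup.closure (s '' S) ≤ Subgroup.closure (s '' Φ) :=
    Subgroup.closure_mono (Set.image_mono Set.inter_subset_left)
  have hW0 : Nat.card (Subgroup.closure (s '' Φ)) ≠ 0 := fun h => hpW (h ▸ dvd_zero p)
  have : Finite (Subgroup.closure (s '' Φ)) := (Nat.card_ne_zero.mp hW0).2
  have : Finite (Subgroup.closure (s '' S)) :=
    Finite.of_injective _ (Subgroup.inclusion_injective hWS)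
  set N := Nat.card (Subgroup.closure (s '' S))
  have hN0 : N ≠ 0 := Nat.card_pos.ne'
  have hpN : ¬ p ∣ N := fun h => hpW (h.trans (Subgroup.card_dvd_of_le hWS))
  have hNP : ∀ l ∈ weightLattice P.toLin coroot S, N • l ∈ (Submodule.span ℤ S).toAddSubgroup :=
    fun _ hl => natCard_nsmul_mem_span_int hS2 hScrys hSs hl
  have := IsAddTorsionFree.of_module_rat (M := V)
  have : AddGroup.FG (Submodule.span ℤ S).toAddSubgroup :=
    Module.Finite.iff_addGroup_fg.mp (Module.Finite.span_of_finite ℤ (hfin.inter_of_left _))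
  have : AddGroup.FG (weightLattice P.toLin coroot S) :=
    AddSubgroup.fg_of_forall_nsmul_mem hN0 hNP
  have hindex := AddSubgroup.index_addSubgroupOf_dvd_pow_of_forall_nsmul_mem hNP
  exact ⟨span_int_le_weightLattice hScrys, ne_zero_of_dvd_ne_zero (pow_ne_zero _ hN0) hindex,
    fun h => hpN (hp.dvd_of_dvd_pow (h.trans hindex))⟩

/-- Let `Φ` be a finite, reduced, crystallographic root system with Weyl group
`W = ⟨s α : α ∈ Φ⟩` and `p` a prime not dividing `|W|`.  Let `Δ` be a base of `Φ`, `Θ ⊆ Δ`, and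
`Φ_Θ = Φ ∩ ℤΘ`.  Then the root lattice `Q(Φ_Θ) = ℤΦ_Θ` is contained in the weight lattice
`P(Φ_Θ)` with finite index (the index of connection of `Φ_Θ`), and `p` does not divide this
index. -/
theorem index_of_connection_not_dvd
    {V V' : Type*} [AddCommGroup V] [Module ℚ V] [AddCommGroup V'] [Module ℚ V']
    [FiniteDimensional ℚ V] [FiniteDimensional ℚ V']
    (P : PerfectPairing ℚ V V')
    (Φ : Set V) (hfin : Φ.Finite) (coroot : V → V')
    (h2 : ∀ α ∈ Φ, P.toLin α (coroot α) = 2)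
    (hcrys : ∀ α ∈ Φ, ∀ β ∈ Φ, ∃ n : ℤ, P.toLin β (coroot α) = (n : ℚ))
    (hred : ∀ α ∈ Φ, ∀ c : ℚ, c • α ∈ Φ → c = 1 ∨ c = -1)
    (s : V → (V ≃ₗ[ℚ] V))
    (hs_def : ∀ α ∈ Φ, ∀ v : V, s α v = v - (P.toLin v (coroot α)) • α)
    (hs_perm : ∀ α ∈ Φ, ∀ β ∈ Φ, s α β ∈ Φ)
    (p : ℕ) (hp : p.Prime)
    (hpW : ¬ p ∣ Nat.card ↥(Subgroup.closure (s '' Φ)))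
    (Δ : Set V) (hΔΦ : Δ ⊆ Φ)
    (hΔind : LinearIndependent ℚ ((↑) : Δ → V))
    (hΔbase : ∀ β ∈ Φ, ∃ c : V →₀ ℤ, ↑c.support ⊆ Δ ∧
        β = c.sum (fun α n => (n : ℚ) • α) ∧ ((∀ α, 0 ≤ c α) ∨ (∀ α, c α ≤ 0)))
    (Θ : Set V) (hΘ : Θ ⊆ Δ) :
    (Submodule.span ℤ (Φ ∩ (Submodule.span ℤ Θ : Set V))).toAddSubgroup ≤
        weightLattice P.toLin coroot (Φ ∩ (Submodule.span ℤ Θ : Set V)) ∧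
    ((Submodule.span ℤ (Φ ∩ (Submodule.span ℤ Θ : Set V))).toAddSubgroup.addSubgroupOf
        (weightLattice P.toLin coroot (Φ ∩ (Submodule.span ℤ Θ : Set V)))).index ≠ 0 ∧
    ¬ p ∣ ((Submodule.span ℤ (Φ ∩ (Submodule.span ℤ Θ : Set V))).toAddSubgroup.addSubgroupOf
        (weightLattice P.toLin coroot (Φ ∩ (Submodule.span ℤ Θ : Set V)))).index :=
  index_of_connection_not_dvd_general P Φ hfin coroot h2 hcrys s hs_def p hp hpW Θ
end

section
/- Let Δ = {α₁, …, α_l} be a base of Φ, and assume Φ spans V. For each i there exists a unique element ω̌_i of the ℚ-span of Φ̌ with ⟨α_j, ω̌_i⟩ = δ_{ij} for all j (the fundamental coweight associated to α_i), and |W| · ω̌_i lies in the ℤ-span of Φ̌; equivalently, every fundamental coweight lies in ℤ[1/|W|]·Φ̌. -/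
/-!
The Weyl group `W` acts on `V'` contragrediently, and a reflection acts by
`ω ↦ ω - ⟨α, ω⟩ α̌`. Hence, for `ω` pairing integrally with all roots, `ω - w ω` lies in the
coroot lattice for every `w ∈ W` (induct on a word for `w`; `W` permutes `Φ`, so integrality
is preserved). The average `∑_{w ∈ W} w ω` is `W`-invariant, so each reflection `s_α` forces
`⟨α, ∑ w ω⟩ = 0`; as `Φ` spans `V` the sum vanishes, and `|W| ω = ∑_{w ∈ W} (ω - w ω)` lies in the
coroot lattice. A fundamental coweight pairs integrally with `Δ`, hence with `Φ ⊆ ℤΔ`.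
-/

open scoped Classical

open MulAction Submodule
open scoped Pointwise

namespace LinearMap

variable {R V V' : Type*} [CommRing R] [AddCommGroup V] [Module R V] [AddCommGroup V'] [Module R V']
  (P : V →ₗ[R] V' →ₗ[R] R)

lemma symm_apply_eq_apply_of_reflection {a : V} {c : V'} {e : V ≃ₗ[R] V} (hac : P a c = 2)
    (he : ∀ v, e v = v - P v c • a) (v : V) : e.symm v = e v := by
  rw [LinearEquiv.symm_apply_eq, he, he]
  simp only [map_sub, map_smul, LinearMap.sub_apply, LinearMap.smul_apply, hac, smul_eq_mul]
  module

variable [P.IsPerfPair]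

lemma eq_of_forall_pairing_eq_of_span_eq_top {Δ : Set V} (hΔ : span R Δ = ⊤) {ω₁ ω₂ : V'}
    (h : ∀ v ∈ Δ, P v ω₁ = P v ω₂) : ω₁ = ω₂ :=
  (IsPerfPair.bijective_right P).injective (ext_on hΔ h)

noncomputable def dualAction : (V ≃ₗ[R] V) →* (V' ≃ₗ[R] V') where
  toFun e := P.flip.toPerfPair ≪≫ₗ e.symm.dualMap ≪≫ₗ P.flip.toPerfPair.symm
  map_one' := LinearEquiv.ext fun ω =>
    P.eq_of_forall_pairing_eq_of_span_eq_top span_univ fun v _ => by simp [← LinearEquiv.coe_inv]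
  map_mul' e₁ e₂ := LinearEquiv.ext fun ω =>
    P.eq_of_forall_pairing_eq_of_span_eq_top span_univ fun v _ => by
      simp [← LinearEquiv.coe_inv, mul_inv_rev]

@[simp]
lemma pairing_dualAction (e : V ≃ₗ[R] V) (v : V) (ω : V') :
    P v (P.dualAction e ω) = P (e.symm v) ω := by
  simp [dualAction]

lemma dualAction_reflection {a : V} {c : V'} {e : V ≃ₗ[R] V} (hac : P a c = 2)
    (he : ∀ v, e v = v - P v c • a) (ω : V') : P.dualAction e ω = ω - P a ω • c :=
  P.eq_of_forall_pairing_eq_of_span_eq_top span_univ fun v _ => by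
    simp only [pairing_dualAction, symm_apply_eq_apply_of_reflection P hac he, he, map_sub,
      map_smul, LinearMap.sub_apply, LinearMap.smul_apply, smul_eq_mul]
    ring

end LinearMap

open LinearMap

section WeylGroup

variable {R V : Type*} [CommRing R] [AddCommGroup V] [Module R V] {Φ : Set V}

lemma closure_le_stabilizer_of_mapsTo {S : Set (V ≃ₗ[R] V)} (hΦ : Φ.Finite)
    (hS : ∀ e ∈ S, ∀ β ∈ Φ, e β ∈ Φ) : Subgroup.closure S ≤ stabilizer (V ≃ₗ[R] V) Φ :=
  (Subgroup.closure_le _).2 fun e he => (mem_stabilizer_set' hΦ).2 (hS e he)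

lemma finite_stabilizer_of_span_eq_top (hΦ : Φ.Finite) (hspan : span R Φ = ⊤) :
    Finite (stabilizer (V ≃ₗ[R] V) Φ) := by
  have := hΦ.to_subtype
  refine Finite.of_injective
    (fun (e : stabilizer (V ≃ₗ[R] V) Φ) (β : Φ) => (⟨e.1 β, ?_⟩ : Φ)) fun e₁ e₂ h => ?_
  · exact (mem_stabilizer_set.1 e.2 β).2 β.2
  · refine Subtype.ext (LinearEquiv.toLinearMap_injective (ext_on hspan fun β hβ => ?_))
    exact congrArg Subtype.val (congrFun h ⟨β, hβ⟩)

lemma finite_closure_of_mapsTo {S : Set (V ≃ₗ[R] V)} (hΦ : Φ.Finite) (hspan : span R Φ = ⊤)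
    (hS : ∀ e ∈ S, ∀ β ∈ Φ, e β ∈ Φ) : Finite (Subgroup.closure S) :=
  have := finite_stabilizer_of_span_eq_top hΦ hspan
  Finite.of_injective _ (Subgroup.inclusion_injective (closure_le_stabilizer_of_mapsTo hΦ hS))

end WeylGroup

section Coweights

variable {R V V' : Type*} [CommRing R] [AddCommGroup V] [Module R V] [AddCommGroup V'] [Module R V']
  (P : V →ₗ[R] V' →ₗ[R] R)

def coweights (Φ : Set V) : Set V' := {ω | ∀ β ∈ Φ, ∃ n : ℤ, P β ω = n}

variable {P} {Φ : Set V}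

lemma coweights_subset_of_subset_span_int {Δ : Set V} (h : Φ ⊆ span ℤ Δ) :
    coweights P Δ ⊆ coweights P Φ := by
  intro ω hω β hβ
  have hβΔ := h hβ
  clear hβ
  induction hβΔ using Submodule.span_induction with
  | mem x hx => exact hω x hx
  | zero => exact ⟨0, by simp⟩
  | add x y _ _ hx hy =>
    obtain ⟨m, hm⟩ := hx
    obtain ⟨n, hn⟩ := hy
    exact ⟨m + n, by simp [hm, hn]⟩
  | smul k x _ hx =>
    obtain ⟨n, hn⟩ := hx
    exact ⟨k * n, by simp [hn]⟩

variable [P.IsPerfPair]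

lemma dualAction_mem_coweights {w : V ≃ₗ[R] V} (hw : w ∈ stabilizer (V ≃ₗ[R] V) Φ) {ω : V'}
    (hω : ω ∈ coweights P Φ) : P.dualAction w ω ∈ coweights P Φ := fun β hβ => by
  rw [pairing_dualAction]
  exact hω _ ((mem_stabilizer_set.1 (inv_mem hw) β).2 hβ)

variable {coroot : V → V'} {s : V → V ≃ₗ[R] V}

lemma sub_dualAction_mem_span_coroot (hΦ : Φ.Finite) (h2 : ∀ α ∈ Φ, P α (coroot α) = 2)
    (hs_def : ∀ α ∈ Φ, ∀ v, s α v = v - P v (coroot α) • α)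
    (hs_perm : ∀ α ∈ Φ, ∀ β ∈ Φ, s α β ∈ Φ) {w : V ≃ₗ[R] V} (hw : w ∈ Subgroup.closure (s '' Φ))
    {ω : V'} (hω : ω ∈ coweights P Φ) : ω - P.dualAction w ω ∈ span ℤ (coroot '' Φ) := by
  have hstab := closure_le_stabilizer_of_mapsTo hΦ (Set.forall_mem_image.2 hs_perm)
  induction hw using Subgroup.closure_induction generalizing ω with
  | mem x hx =>
    obtain ⟨α, hα, rfl⟩ := hx
    obtain ⟨n, hn⟩ := hω α hα
    rw [dualAction_reflection P (h2 α hα) (hs_def α hα), sub_sub_cancel, hn,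
      Int.cast_smul_eq_zsmul]
    exact zsmul_mem (subset_span (Set.mem_image_of_mem coroot hα)) n
  | one => simp
  | mul x y _ hy hx_ih hy_ih =>
    rw [map_mul, LinearEquiv.mul_apply, ← sub_add_sub_cancel ω (P.dualAction y ω)]
    exact add_mem (hy_ih hω) (hx_ih (dualAction_mem_coweights (hstab hy) hω))
  | inv x hx ih =>
    have := ih (dualAction_mem_coweights (hstab (inv_mem hx)) hω)
    rwa [← LinearEquiv.mul_apply, ← map_mul, mul_inv_cancel, map_one, LinearEquiv.coe_one, id_eq,
      ← neg_mem_iff, neg_sub] at this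

end Coweights

section Averaging

variable {K V V' : Type*} [Field K] [NeZero (2 : K)] [AddCommGroup V] [Module K V] [AddCommGroup V']
  [Module K V'] (P : V →ₗ[K] V' →ₗ[K] K) [P.IsPerfPair]

lemma pairing_eq_zero_of_dualAction_reflection_eq_self {a : V} {c : V'} {e : V ≃ₗ[K] V}
    (hac : P a c = 2) (he : ∀ v, e v = v - P v c • a) {θ : V'} (hθ : P.dualAction e θ = θ) :
    P a θ = 0 := by
  rw [dualAction_reflection P hac he, sub_eq_self, smul_eq_zero] at hθ
  refine hθ.resolve_right fun hc => two_ne_zero (α := K) ?_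
  rw [← hac, hc, map_zero]

variable {Φ : Set V} {coroot : V → V'} {s : V → V ≃ₗ[K] V}

lemma sum_dualAction_eq_zero (G : Subgroup (V ≃ₗ[K] V)) [Fintype G] (hspan : span K Φ = ⊤)
    (h2 : ∀ α ∈ Φ, P α (coroot α) = 2) (hs_def : ∀ α ∈ Φ, ∀ v, s α v = v - P v (coroot α) • α)
    (hsG : ∀ α ∈ Φ, s α ∈ G) (ω : V') : ∑ g : G, P.dualAction g ω = 0 := by
  have hinv (h : G) : P.dualAction h (∑ g : G, P.dualAction g ω) = ∑ g : G, P.dualAction g ω := by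
    simp only [map_sum, ← LinearEquiv.mul_apply, ← map_mul]
    exact Fintype.sum_equiv (Equiv.mulLeft h) _ _ fun g => rfl
  refine P.eq_of_forall_pairing_eq_of_span_eq_top hspan fun α hα => ?_
  rw [map_zero]
  exact pairing_eq_zero_of_dualAction_reflection_eq_self P (h2 α hα) (hs_def α hα)
    (hinv ⟨s α, hsG α hα⟩)

theorem card_smul_mem_span_coroot (hΦ : Φ.Finite) (hspan : span K Φ = ⊤)
    (h2 : ∀ α ∈ Φ, P α (coroot α) = 2) (hs_def : ∀ α ∈ Φ, ∀ v, s α v = v - P v (coroot α) • α)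
    (hs_perm : ∀ α ∈ Φ, ∀ β ∈ Φ, s α β ∈ Φ) {ω : V'} (hω : ω ∈ coweights P Φ) :
    Nat.card (Subgroup.closure (s '' Φ)) • ω ∈ span ℤ (coroot '' Φ) := by
  have := finite_closure_of_mapsTo hΦ hspan (Set.forall_mem_image.2 hs_perm)
  let := Fintype.ofFinite (Subgroup.closure (s '' Φ))
  have hsum : ∑ w : Subgroup.closure (s '' Φ), (ω - P.dualAction w ω) =
      Nat.card (Subgroup.closure (s '' Φ)) • ω := by
    rw [Finset.sum_sub_distrib, sum_dualAction_eq_zero P _ hspan h2 hs_def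
      (fun α hα => Subgroup.subset_closure (Set.mem_image_of_mem s hα)), sub_zero,
      Finset.sum_const, Finset.card_univ, Nat.card_eq_fintype_card]
  rw [← hsum]
  exact sum_mem fun w _ => sub_dualAction_mem_span_coroot hΦ h2 hs_def hs_perm w.2 hω

theorem mem_span_coroot_of_mem_coweights [CharZero K] (hΦ : Φ.Finite) (hspan : span K Φ = ⊤)
    (h2 : ∀ α ∈ Φ, P α (coroot α) = 2) (hs_def : ∀ α ∈ Φ, ∀ v, s α v = v - P v (coroot α) • α)
    (hs_perm : ∀ α ∈ Φ, ∀ β ∈ Φ, s α β ∈ Φ) {ω : V'} (hω : ω ∈ coweights P Φ) :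
    ω ∈ span K (coroot '' Φ) := by
  have := finite_closure_of_mapsTo hΦ hspan (Set.forall_mem_image.2 hs_perm)
  have hcard : (Nat.card (Subgroup.closure (s '' Φ)) : K) ≠ 0 :=
    Nat.cast_ne_zero.2 Nat.card_pos.ne'
  rw [← smul_mem_iff _ hcard, Nat.cast_smul_eq_nsmul]
  exact span_le_restrictScalars ℤ K _ (card_smul_mem_span_coroot P hΦ hspan h2 hs_def hs_perm hω)

end Averaging

section FundamentalCoweight

variable {R V V' : Type*} [CommRing R] [AddCommGroup V] [Module R V] [AddCommGroup V']
  [Module R V'] (P : V →ₗ[R] V' →ₗ[R] R) [P.IsPerfPair]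

lemma Finsupp.sum_intCast_smul_mem_span_int {Δ : Set V} {c : V →₀ ℤ} (hc : ↑c.support ⊆ Δ) :
    c.sum (fun α n => (n : R) • α) ∈ span ℤ Δ :=
  sum_mem fun α hα => by
    simpa only [Int.cast_smul_eq_zsmul] using zsmul_mem (subset_span (hc hα)) (c α)

lemma exists_pairing_eq_ite {Δ : Set V} (hind : LinearIndependent R ((↑) : Δ → V))
    (hΔ : span R Δ = ⊤) {α : V} (hα : α ∈ Δ) :
    ∃ ω : V', ∀ β ∈ Δ, P β ω = if β = α then 1 else 0 := by
  let b := Module.Basis.mk hind (by rw [Subtype.range_coe, hΔ])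
  refine ⟨P.flip.toPerfPair.symm (b.coord ⟨α, hα⟩), fun β hβ => ?_⟩
  have hb : β = b ⟨β, hβ⟩ := (Module.Basis.mk_apply hind _ ⟨β, hβ⟩).symm
  conv_lhs => rw [hb]
  rw [apply_toPerfPair_flip, Module.Basis.coord_apply, Module.Basis.repr_self, Finsupp.single_apply]
  simp [Subtype.ext_iff]

end FundamentalCoweight

theorem fundamental_coweight_in_weyl_order_inv_coroot_lattice_general
    {V V' : Type*} [AddCommGroup V] [Module ℚ V] [AddCommGroup V'] [Module ℚ V']
    (P : V →ₗ[ℚ] V' →ₗ[ℚ] ℚ) [P.IsPerfPair]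
    (Φ : Set V) (hfin : Φ.Finite) (coroot : V → V')
    (h2 : ∀ α ∈ Φ, P α (coroot α) = 2)
    (s : V → (V ≃ₗ[ℚ] V))
    (hs_def : ∀ α ∈ Φ, ∀ v : V, s α v = v - (P v (coroot α)) • α)
    (hs_perm : ∀ α ∈ Φ, ∀ β ∈ Φ, s α β ∈ Φ)
    (hspan : Submodule.span ℚ Φ = ⊤)
    (Δ : Set V)
    (hΔind : LinearIndependent ℚ ((↑) : Δ → V))
    (hΔbase : ∀ β ∈ Φ, ∃ c : V →₀ ℤ, ↑c.support ⊆ Δ ∧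
        β = c.sum (fun α n => (n : ℚ) • α) ∧ ((∀ α, 0 ≤ c α) ∨ (∀ α, c α ≤ 0))) :
    ∀ α ∈ Δ,
      (∃! ω : V', ω ∈ Submodule.span ℚ (coroot '' Φ) ∧
          ∀ β ∈ Δ, P β ω = if β = α then 1 else 0) ∧
      (∀ ω : V', ω ∈ Submodule.span ℚ (coroot '' Φ) →
          (∀ β ∈ Δ, P β ω = if β = α then 1 else 0) →
          (Nat.card ↥(Subgroup.closure (s '' Φ)) : ℤ) • ω ∈
            Submodule.span ℤ (coroot '' Φ)) := by
  intro α hα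
  have hΦΔ : Φ ⊆ span ℤ Δ := fun β hβ => by
    obtain ⟨c, hc, rfl, -⟩ := hΔbase β hβ
    exact Finsupp.sum_intCast_smul_mem_span_int hc
  have hΔspan : span ℚ Δ = ⊤ :=
    eq_top_iff.2 (hspan ▸ span_le.2 fun β hβ => span_le_restrictScalars ℤ ℚ Δ (hΦΔ hβ))
  have hcoweight (ω : V') (hω : ∀ β ∈ Δ, P β ω = if β = α then 1 else 0) :
      ω ∈ coweights P Φ :=
    coweights_subset_of_subset_span_int hΦΔ fun β hβ =>
      ⟨if β = α then 1 else 0, by simp [hω β hβ]⟩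
  obtain ⟨ω, hω⟩ := exists_pairing_eq_ite P hΔind hΔspan hα
  refine ⟨⟨ω, ⟨?_, hω⟩, fun ω' hω' => ?_⟩, fun ω' _ hω' => ?_⟩
  · exact mem_span_coroot_of_mem_coweights P hfin hspan h2 hs_def hs_perm (hcoweight ω hω)
  · exact P.eq_of_forall_pairing_eq_of_span_eq_top hΔspan fun β hβ =>
      (hω'.2 β hβ).trans (hω β hβ).symm
  · rw [natCast_zsmul]
    exact card_smul_mem_span_coroot P hfin hspan h2 hs_def hs_perm (hcoweight ω' hω')

/-- Let `Φ` be a finite, reduced, crystallographic root system spanning `V`,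
with Weyl group `W = ⟨s α : α ∈ Φ⟩`, and let `Δ` be a base of `Φ`.  For each `α ∈ Δ` there is a
unique element `ω̌` of the `ℚ`-span of the coroots `Φ̌` with `⟨β, ω̌⟩ = δ_{βα}` for all `β ∈ Δ`
(the fundamental coweight associated to `α`), and `|W| • ω̌` lies in the `ℤ`-span of `Φ̌`. -/
theorem fundamental_coweight_in_weyl_order_inv_coroot_lattice
    {V V' : Type*} [AddCommGroup V] [Module ℚ V] [AddCommGroup V'] [Module ℚ V']
    [FiniteDimensional ℚ V] [FiniteDimensional ℚ V']
    (P : V →ₗ[ℚ] V' →ₗ[ℚ] ℚ) [P.IsPerfPair]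
    (Φ : Set V) (hfin : Φ.Finite) (coroot : V → V')
    (h2 : ∀ α ∈ Φ, P α (coroot α) = 2)
    (hcrys : ∀ α ∈ Φ, ∀ β ∈ Φ, ∃ n : ℤ, P β (coroot α) = (n : ℚ))
    (hred : ∀ α ∈ Φ, ∀ c : ℚ, c • α ∈ Φ → c = 1 ∨ c = -1)
    (s : V → (V ≃ₗ[ℚ] V))
    (hs_def : ∀ α ∈ Φ, ∀ v : V, s α v = v - (P v (coroot α)) • α)
    (hs_perm : ∀ α ∈ Φ, ∀ β ∈ Φ, s α β ∈ Φ)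
    (hspan : Submodule.span ℚ Φ = ⊤)
    (Δ : Set V) (hΔΦ : Δ ⊆ Φ)
    (hΔind : LinearIndependent ℚ ((↑) : Δ → V))
    (hΔbase : ∀ β ∈ Φ, ∃ c : V →₀ ℤ, ↑c.support ⊆ Δ ∧
        β = c.sum (fun α n => (n : ℚ) • α) ∧ ((∀ α, 0 ≤ c α) ∨ (∀ α, c α ≤ 0))) :
    ∀ α ∈ Δ,
      (∃! ω : V', ω ∈ Submodule.span ℚ (coroot '' Φ) ∧
          ∀ β ∈ Δ, P β ω = if β = α then 1 else 0) ∧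
      (∀ ω : V', ω ∈ Submodule.span ℚ (coroot '' Φ) →
          (∀ β ∈ Δ, P β ω = if β = α then 1 else 0) →
          (Nat.card ↥(Subgroup.closure (s '' Φ)) : ℤ) • ω ∈
            Submodule.span ℤ (coroot '' Φ)) :=
  fundamental_coweight_in_weyl_order_inv_coroot_lattice_general P Φ hfin coroot h2 s hs_def hs_perm
    hspan Δ hΔind hΔbase
end

section
/- Let Δ be a base of Φ and Θ ⊆ Δ. Within the ℚ-span of Φ̌ one has the direct sum decomposition (ℚ-span of Φ̌) = (ℚ-span of {α̌ : α ∈ Θ}) ⊕ {v ∈ ℚ-span of Φ̌ : ⟨α, v⟩ = 0 for all α ∈ Θ}; write π for the projection onto the first summand along the second. Then for every root β ∈ Φ, the element |W| · π(β̌) lies in the ℤ-span of {α̌ : α ∈ Θ}. (Equivalently, the component of β̌ in the span of the coroots of the subsystem Φ_Θ = Φ ∩ ℤΘ equals Σ_{α∈Θ} ⟨β, α̌⟩·ω̌⁰_α, an integral combination of the fundamental coweights of Φ_Θ, and hence lies in ℤ[1/|W|]·{α̌ : α ∈ Θ}.) -/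
/-!
On `span ℚ Φ` the roots and (restricted) coroots form a finite root pairing, whose canonical
invariant form is positive definite. Hence the Cartan matrix `(⟨β, α̌⟩)_{α, β ∈ Θ}` of the linearly
independent set `Θ` is invertible, i.e. `ℚΘ̌` is a complement of `⋂_{α ∈ Θ} ker ⟨α, ·⟩`.

For the integrality, let `W_Θ = ⟨s_α : α ∈ Θ⟩` act contragrediently on `V'`, so that `s_α` acts by
`x ↦ x - ⟨α, x⟩ α̌`. Since `⟨α, ·⟩` is integral on the coset `u + ℤΘ̌`, this coset is
`W_Θ`-stable, so `∑_{g ∈ W_Θ} g u ≡ |W_Θ| u` modulo `ℤΘ̌`. The sum lies in `ℚΘ̌` and is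
`W_Θ`-fixed, hence killed by every `α ∈ Θ`, hence zero. Finally `|W_Θ|` divides `|W|`.
-/

open Module Set Submodule

lemma inv_eq_self_of_apply_eq_sub_smul {k V : Type*} [CommRing k] [AddCommGroup V] [Module k V]
    {s : V ≃ₗ[k] V} {α : V} {f : Dual k V} (h : f α = 2) (hs : ∀ v, s v = v - f v • α) :
    s⁻¹ = s := by
  obtain rfl : s = reflection h := LinearEquiv.ext hs
  exact reflection_inv h

section Contragredient

variable {k V V' : Type*} [Field k] [AddCommGroup V] [Module k V] [AddCommGroup V'] [Module k V']
  (P : V →ₗ[k] V' →ₗ[k] k) [P.IsPerfPair]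

variable {P} in
lemma eq_of_forall_pairing_eq {x y : V'} (h : ∀ v, P v x = P v y) : x = y :=
  P.flip.toPerfPair.injective (LinearMap.ext h)

noncomputable def contragredient : (V ≃ₗ[k] V) →* (V' ≃ₗ[k] V') where
  toFun g := P.flip.toPerfPair.trans (g.symm.dualMap.trans P.flip.toPerfPair.symm)
  map_one' := by ext x; exact eq_of_forall_pairing_eq (P := P) fun v ↦ by simp; rfl
  map_mul' g h := by ext x; exact eq_of_forall_pairing_eq (P := P) fun v ↦ by simp; rfl

lemma apply_contragredient_apply (g : V ≃ₗ[k] V) (v : V) (x : V') :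
    P v (contragredient P g x) = P (g.symm v) x := by
  simp [contragredient]

lemma contragredient_apply_of_reflection {s : V ≃ₗ[k] V} {α : V} {α' : V'} (h : P α α' = 2)
    (hs : ∀ v, s v = v - P v α' • α) (x : V') :
    contragredient P s x = x - P α x • α' := by
  have hsymm : s.symm = s := inv_eq_self_of_apply_eq_sub_smul (f := P.flip α') h hs
  refine eq_of_forall_pairing_eq (P := P) fun v ↦ ?_
  simp [apply_contragredient_apply, hsymm, hs, mul_comm]

end Contragredient

section RootPairingOnSpan

variable {k V V' : Type*} [Field k] [CharZero k] [AddCommGroup V] [Module k V] [AddCommGroup V']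
  [Module k V'] (P : V →ₗ[k] V' →ₗ[k] k) (Φ : Set V) [Finite Φ] (coroot : V → V')

/- On `V'` itself the coroots need not be permuted by the coreflections; as functionals on
`span k Φ` they are, which `RootPairing.mk''` derives from the finiteness of `Φ`. -/
noncomputable def rootPairingOnSpan (h2 : ∀ α ∈ Φ, P α (coroot α) = 2)
    (hmaps : ∀ α ∈ Φ, MapsTo (preReflection α (P.flip (coroot α))) Φ Φ) :
    RootPairing Φ k (span k Φ) (Dual k (span k Φ)) :=
  haveI := FiniteDimensional.span_of_finite k (toFinite Φ)
  RootPairing.mk'' (Dual.eval k (span k Φ))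
    ⟨inclusion subset_span, inclusion_injective subset_span⟩
    ⟨fun α ↦ (span k Φ).subtype.dualMap (P.flip (coroot α)), by
      intro α β h
      have h' : ∀ γ ∈ Φ, P γ (coroot α) = P γ (coroot β) := fun γ hγ ↦
        LinearMap.congr_fun h ⟨γ, subset_span hγ⟩
      have := IsAddTorsionFree.of_isTorsionFree k V
      exact Subtype.ext <| eq_of_mapsTo_reflection_of_mem (toFinite Φ) (h2 α α.2) (h2 β β.2)
        ((h' α α.2).symm.trans (h2 α α.2)) ((h' β β.2).trans (h2 β β.2)) (hmaps α α.2)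
        (hmaps β β.2) β.2⟩
    (fun α ↦ h2 α α.2)
    (by
      rintro α - ⟨β, rfl⟩
      exact ⟨⟨_, hmaps α α.2 β.2⟩, Subtype.ext <| by simp [preReflection_apply]; rfl⟩)
    (by
      simp only [Function.Embedding.coeFn_mk, range_inclusion]
      exact span_span_coe_preimage)

end RootPairingOnSpan

lemma RootPairing.linearIndependent_pairing_of_linearIndependent_root
    {ι κ R M N : Type*} [Fintype ι] [Finite κ] [Field R] [LinearOrder R] [IsStrictOrderedRing R]
    [AddCommGroup M] [Module R M] [AddCommGroup N] [Module R N]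
    (Q : RootPairing ι R M N) {e : κ → ι} (he : LinearIndependent R (Q.root ∘ e)) :
    LinearIndependent R (fun a b ↦ Q.pairing (e b) (e a)) := by
  have := Fintype.ofFinite κ
  set B := Q.RootForm
  have hB : ∀ a, 0 < B (Q.root a) (Q.root a) := fun a ↦
    Q.rootForm_pos_of_ne_zero (subset_span (mem_range_self a)) (Q.ne_zero a)
  rw [Fintype.linearIndependent_iff] at he ⊢
  intro c hc
  set z := ∑ a, (c a / B (Q.root (e a)) (Q.root (e a))) • Q.root (e a) with hz_def
  have hz : ∀ b, B (Q.root (e b)) z = 0 := by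
    intro b
    have hBb : ∀ a, 2 * B (Q.root (e b)) (Q.root (e a)) =
        Q.pairing (e b) (e a) * B (Q.root (e a)) (Q.root (e a)) :=
      fun a ↦ Q.toInvariantForm.two_mul_apply_root_root (e b) (e a)
    have hcb : ∑ a, c a * Q.pairing (e b) (e a) = 0 := by simpa using congrFun hc b
    calc B (Q.root (e b)) z
        = ∑ a, c a / B (Q.root (e a)) (Q.root (e a)) * B (Q.root (e b)) (Q.root (e a)) := by
          simp only [hz_def, map_sum, map_smul, smul_eq_mul]
      _ = (∑ a, c a * Q.pairing (e b) (e a)) / 2 := by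
          rw [Finset.sum_div]
          refine Finset.sum_congr rfl fun a _ ↦ ?_
          field_simp [(hB (e a)).ne']
          linear_combination c a * hBb a
      _ = 0 := by rw [hcb, zero_div]
  have hzz : B z z = 0 := by
    nth_rw 1 [hz_def]
    simp [hz]
  have hz0 : z = 0 := Q.eq_zero_of_mem_rootSpan_of_rootForm_self_eq_zero
    (sum_mem fun a _ ↦ smul_mem _ _ (subset_span (mem_range_self _))) hzz
  intro a
  exact (div_eq_zero_iff.mp (he _ hz0 a)).resolve_right (hB (e a)).ne'

lemma isCompl_span_range_ker {K M N ι : Type*} [Field K] [AddCommGroup M] [Module K M]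
    [AddCommGroup N] [Module K N] [FiniteDimensional K N] [Fintype ι] {f : M →ₗ[K] N}
    {v : ι → M} (hv : LinearIndependent K (f ∘ v)) (hcard : Fintype.card ι = finrank K N) :
    IsCompl (span K (range v)) (LinearMap.ker f) := by
  refine ⟨range_ker_disjoint hv, codisjoint_iff.mpr ?_⟩
  rw [← comap_map_eq, map_span, ← range_comp, hv.span_eq_top_of_card_eq_finrank' hcard, comap_top]

lemma linearIndependent_pairing_coroot {k V V' : Type*} [Field k] [LinearOrder k]
    [IsStrictOrderedRing k] [AddCommGroup V] [Module k V] [AddCommGroup V'] [Module k V']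
    (P : V →ₗ[k] V' →ₗ[k] k) (Φ : Set V) [Finite Φ] (coroot : V → V')
    (h2 : ∀ α ∈ Φ, P α (coroot α) = 2)
    (hmaps : ∀ α ∈ Φ, MapsTo (preReflection α (P.flip (coroot α))) Φ Φ) {Θ : Set V}
    (hΘ : Θ ⊆ Φ) (hind : LinearIndependent k ((↑) : Θ → V)) :
    LinearIndependent k (fun a : Θ ↦ fun b : Θ ↦ P b (coroot a)) := by
  have := Fintype.ofFinite Φ
  have := Finite.Set.subset Φ hΘ
  exact (rootPairingOnSpan P Φ coroot h2 hmaps).linearIndependent_pairing_of_linearIndependent_root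
    (e := inclusion hΘ) (.of_comp (span k Φ).subtype hind)

lemma isCompl_span_coroot_iInf_ker {k V V' : Type*} [Field k] [LinearOrder k]
    [IsStrictOrderedRing k] [AddCommGroup V] [Module k V] [AddCommGroup V'] [Module k V']
    (P : V →ₗ[k] V' →ₗ[k] k) (Φ : Set V) [Finite Φ] (coroot : V → V')
    (h2 : ∀ α ∈ Φ, P α (coroot α) = 2)
    (hmaps : ∀ α ∈ Φ, MapsTo (preReflection α (P.flip (coroot α))) Φ Φ) {Θ : Set V}
    (hΘ : Θ ⊆ Φ) (hind : LinearIndependent k ((↑) : Θ → V)) :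
    IsCompl (span k (coroot '' Θ)) (⨅ α ∈ Θ, LinearMap.ker (P α)) := by
  have := Finite.Set.subset Φ hΘ
  have := Fintype.ofFinite Θ
  rw [image_eq_range, iInf_subtype', ← LinearMap.ker_pi]
  exact isCompl_span_range_ker (linearIndependent_pairing_coroot P Φ coroot h2 hmaps hΘ hind)
    (by simp)

lemma exists_int_eq_of_mem_span_int {k M : Type*} [Field k] [AddCommGroup M] [Module k M]
    {f : M →ₗ[k] k} {S : Set M} (hS : ∀ x ∈ S, ∃ n : ℤ, f x = n) {y : M}
    (hy : y ∈ span ℤ S) : ∃ n : ℤ, f y = n := by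
  induction hy using span_induction with
  | mem x hx => exact hS x hx
  | zero => exact ⟨0, by simp⟩
  | add x y _ _ hx hy =>
    obtain ⟨m, hm⟩ := hx
    obtain ⟨n, hn⟩ := hy
    exact ⟨m + n, by simp [hm, hn]⟩
  | smul z x _ hx =>
    obtain ⟨n, hn⟩ := hx
    exact ⟨z * n, by simp [hn]⟩

section Integrality

variable {k V V' : Type*} [Field k] [AddCommGroup V] [Module k V] [AddCommGroup V']
  [Module k V'] (P : V →ₗ[k] V' →ₗ[k] k) [P.IsPerfPair] {Θ : Set V} {coroot : V → V'}
  {s : V → V ≃ₗ[k] V} (h2 : ∀ a ∈ Θ, P a (coroot a) = 2)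
  (hs : ∀ a ∈ Θ, ∀ v, s a v = v - P v (coroot a) • a)
  (hint : ∀ a ∈ Θ, ∀ b ∈ Θ, ∃ n : ℤ, P a (coroot b) = n) {u : V'}
  (hu : ∀ a ∈ Θ, ∃ n : ℤ, P a u = n)

include h2 hs hint hu in
lemma contragredient_apply_sub_mem_span_int {g : V ≃ₗ[k] V}
    (hg : g ∈ Subgroup.closure (s '' Θ)) :
    contragredient P g u - u ∈ span ℤ (coroot '' Θ) := by
  set C : Set V' := {x | x - u ∈ span ℤ (coroot '' Θ)}
  have hgen : ∀ a ∈ Θ, MapsTo (contragredient P (s a)) C C := by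
    intro a ha x hx
    obtain ⟨m, hm⟩ := exists_int_eq_of_mem_span_int (f := P a)
      (by rintro _ ⟨b, hb, rfl⟩; exact hint a ha b hb) hx
    obtain ⟨n, hn⟩ := hu a ha
    have hx' : contragredient P (s a) x - u = (x - u) - (m + n) • coroot a := by
      rw [contragredient_apply_of_reflection P (h2 a ha) (hs a ha), ← Int.cast_smul_eq_zsmul k,
        Int.cast_add, ← hm, ← hn, map_sub, sub_add_cancel]
      abel
    rw [mem_ofPred_eq, hx']
    exact sub_mem hx (zsmul_mem (subset_span (mem_image_of_mem coroot ha)) _)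
  have hC : MapsTo (contragredient P g) C C := by
    induction hg using Subgroup.closure_induction'' with
    | mem _ h => obtain ⟨a, ha, rfl⟩ := h; exact hgen a ha
    | inv_mem _ h =>
      obtain ⟨a, ha, rfl⟩ := h
      rw [inv_eq_self_of_apply_eq_sub_smul (f := P.flip (coroot a)) (h2 a ha) (hs a ha)]
      exact hgen a ha
    | one => simpa using mapsTo_id C
    | mul g h _ _ hg hh => rw [map_mul]; exact hg.comp hh
  simpa [C] using hC (show u ∈ C by simp [C])

include h2 hs hint hu in
lemma card_closure_smul_mem_span_int [CharZero k] (huL : u ∈ span k (coroot '' Θ))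
    (hdisj : Disjoint (span k (coroot '' Θ)) (⨅ a ∈ Θ, LinearMap.ker (P a))) :
    (Nat.card (Subgroup.closure (s '' Θ)) : ℤ) • u ∈ span ℤ (coroot '' Θ) := by
  set G := Subgroup.closure (s '' Θ)
  cases finite_or_infinite G
  swap
  · simp [Nat.card_eq_zero_of_infinite]
  have := Fintype.ofFinite G
  set x := ∑ g : G, contragredient P g u
  have hdiff : x - (Nat.card G : ℤ) • u ∈ span ℤ (coroot '' Θ) := by
    rw [Nat.card_eq_fintype_card, natCast_zsmul, ← Finset.card_univ, ← Finset.sum_const,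
      ← Finset.sum_sub_distrib]
    exact sum_mem fun g _ ↦ contragredient_apply_sub_mem_span_int P h2 hs hint hu g.2
  have hxL : x ∈ span k (coroot '' Θ) := by
    rw [← sub_add_cancel x ((Nat.card G : ℤ) • u)]
    exact add_mem (span_le_restrictScalars ℤ k _ hdiff) (zsmul_mem huL _)
  have hxΘ : ∀ a ∈ Θ, P a x = 0 := by
    intro a ha
    have hsa : s a ∈ G := Subgroup.subset_closure (mem_image_of_mem s ha)
    have hfix : contragredient P (s a) x = x :=
      calc contragredient P (s a) x = ∑ g : G, contragredient P ↑(⟨s a, hsa⟩ * g) u := by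
            simp only [x, map_sum, Subgroup.coe_mul, map_mul, LinearEquiv.mul_apply]
        _ = x := Fintype.sum_bijective _ (Group.mulLeft_bijective _) _ _ fun _ ↦ rfl
    rw [contragredient_apply_of_reflection P (h2 a ha) (hs a ha), sub_eq_self] at hfix
    refine (smul_eq_zero.mp hfix).resolve_right fun h0 ↦ ?_
    simpa [h0] using h2 a ha
  have hx0 : x = 0 := disjoint_def.mp hdisj x hxL (by simpa [mem_iInf] using hxΘ)
  rwa [hx0, zero_sub, neg_mem_iff] at hdiff

end Integrality

theorem weyl_order_smul_projection_of_coroot_mem_span_general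
    {V V' : Type*} [AddCommGroup V] [Module ℚ V] [AddCommGroup V'] [Module ℚ V']
    (P : V →ₗ[ℚ] V' →ₗ[ℚ] ℚ) [P.IsPerfPair]
    (Φ : Set V) (hfin : Φ.Finite) (coroot : V → V')
    (h2 : ∀ α ∈ Φ, P α (coroot α) = 2)
    (hcrys : ∀ α ∈ Φ, ∀ β ∈ Φ, ∃ n : ℤ, P β (coroot α) = (n : ℚ))
    (s : V → (V ≃ₗ[ℚ] V))
    (hs_def : ∀ α ∈ Φ, ∀ v : V, s α v = v - (P v (coroot α)) • α)
    (hs_perm : ∀ α ∈ Φ, ∀ β ∈ Φ, s α β ∈ Φ)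
    (Δ : Set V) (hΔΦ : Δ ⊆ Φ)
    (hΔind : LinearIndependent ℚ ((↑) : Δ → V))
    (Θ : Set V) (hΘ : Θ ⊆ Δ) :
    Submodule.span ℚ (coroot '' Θ) ⊓
        (Submodule.span ℚ (coroot '' Φ) ⊓ ⨅ α ∈ Θ, LinearMap.ker (P α)) = ⊥ ∧
    Submodule.span ℚ (coroot '' Φ) =
        Submodule.span ℚ (coroot '' Θ) ⊔
        (Submodule.span ℚ (coroot '' Φ) ⊓ ⨅ α ∈ Θ, LinearMap.ker (P α)) ∧
    ∀ β ∈ Φ, ∀ u w : V', u ∈ Submodule.span ℚ (coroot '' Θ) →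
        w ∈ Submodule.span ℚ (coroot '' Φ) ⊓ ⨅ α ∈ Θ, LinearMap.ker (P α) →
        coroot β = u + w →
        (Nat.card ↥(Subgroup.closure (s '' Φ)) : ℤ) • u ∈ Submodule.span ℤ (coroot '' Θ) := by
  have hΘΦ : Θ ⊆ Φ := hΘ.trans hΔΦ
  have : Finite Φ := hfin
  have hmaps : ∀ α ∈ Φ, MapsTo (preReflection α (P.flip (coroot α))) Φ Φ := fun α hα β hβ ↦ by
    simpa [preReflection_apply, hs_def α hα] using hs_perm α hα β hβ
  have hcompl := isCompl_span_coroot_iInf_ker P Φ coroot h2 hmaps hΘΦ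
    (LinearIndepOn.mono (R := ℚ) (v := id) hΔind hΘ)
  refine ⟨(hcompl.disjoint.mono_right inf_le_right).eq_bot, ?_, ?_⟩
  · rw [inf_comm, ← sup_inf_assoc_of_le _ (span_mono (image_mono hΘΦ)), hcompl.sup_eq_top,
      top_inf_eq]
  intro β hβ u w hu hw hβuw
  have hu_int : ∀ a ∈ Θ, ∃ n : ℤ, P a u = n := fun a ha ↦ by
    have hwa : P a w = 0 := by simpa using (mem_iInf _).mp ((mem_iInf _).mp hw.2 a) ha
    simpa [hβuw, hwa] using hcrys β hβ a (hΘΦ ha)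
  obtain ⟨d, hd⟩ := Subgroup.card_dvd_of_le (Subgroup.closure_mono (image_mono (f := s) hΘΦ))
  rw [hd, Nat.cast_mul, mul_comm, mul_smul]
  exact zsmul_mem (card_closure_smul_mem_span_int P (fun a ha ↦ h2 a (hΘΦ ha))
    (fun a ha ↦ hs_def a (hΘΦ ha)) (fun a ha b hb ↦ hcrys b (hΘΦ hb) a (hΘΦ ha)) hu_int hu
    hcompl.disjoint) _

/-- Let `Φ` be a finite, reduced, crystallographic root system with Weyl group
`W = ⟨s α : α ∈ Φ⟩`, let `Δ` be a base of `Φ` and `Θ ⊆ Δ`.  Within the `ℚ`-span of the coroots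
`Φ̌` one has the direct sum decomposition `ℚΦ̌ = ℚΘ̌ ⊕ K`, where
`K = {v ∈ ℚΦ̌ : ⟨α, v⟩ = 0 for all α ∈ Θ}`.  Moreover, for every root `β ∈ Φ`, the component
`u` of `β̌` in `ℚΘ̌` (along `K`) satisfies `|W| • u ∈ ℤΘ̌`. -/
theorem weyl_order_smul_projection_of_coroot_mem_span
    {V V' : Type*} [AddCommGroup V] [Module ℚ V] [AddCommGroup V'] [Module ℚ V']
    [FiniteDimensional ℚ V] [FiniteDimensional ℚ V']
    (P : V →ₗ[ℚ] V' →ₗ[ℚ] ℚ) [P.IsPerfPair]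
    (Φ : Set V) (hfin : Φ.Finite) (coroot : V → V')
    (h2 : ∀ α ∈ Φ, P α (coroot α) = 2)
    (hcrys : ∀ α ∈ Φ, ∀ β ∈ Φ, ∃ n : ℤ, P β (coroot α) = (n : ℚ))
    (hred : ∀ α ∈ Φ, ∀ c : ℚ, c • α ∈ Φ → c = 1 ∨ c = -1)
    (s : V → (V ≃ₗ[ℚ] V))
    (hs_def : ∀ α ∈ Φ, ∀ v : V, s α v = v - (P v (coroot α)) • α)
    (hs_perm : ∀ α ∈ Φ, ∀ β ∈ Φ, s α β ∈ Φ)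
    (Δ : Set V) (hΔΦ : Δ ⊆ Φ)
    (hΔind : LinearIndependent ℚ ((↑) : Δ → V))
    (hΔbase : ∀ β ∈ Φ, ∃ c : V →₀ ℤ, ↑c.support ⊆ Δ ∧
        β = c.sum (fun α n => (n : ℚ) • α) ∧ ((∀ α, 0 ≤ c α) ∨ (∀ α, c α ≤ 0)))
    (Θ : Set V) (hΘ : Θ ⊆ Δ) :
    Submodule.span ℚ (coroot '' Θ) ⊓
        (Submodule.span ℚ (coroot '' Φ) ⊓ ⨅ α ∈ Θ, LinearMap.ker (P α)) = ⊥ ∧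
    Submodule.span ℚ (coroot '' Φ) =
        Submodule.span ℚ (coroot '' Θ) ⊔
        (Submodule.span ℚ (coroot '' Φ) ⊓ ⨅ α ∈ Θ, LinearMap.ker (P α)) ∧
    ∀ β ∈ Φ, ∀ u w : V', u ∈ Submodule.span ℚ (coroot '' Θ) →
        w ∈ Submodule.span ℚ (coroot '' Φ) ⊓ ⨅ α ∈ Θ, LinearMap.ker (P α) →
        coroot β = u + w →
        (Nat.card ↥(Subgroup.closure (s '' Φ)) : ℤ) • u ∈ Submodule.span ℤ (coroot '' Θ) :=
  weyl_order_smul_projection_of_coroot_mem_span_general P Φ hfin coroot h2 hcrys s hs_def hs_perm Δ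
    hΔΦ hΔind Θ hΘ
end

section
/- Let X ∈ L* be a linear functional vanishing on every root space L_α (α ∈ Φ). Set Φ' = {α ∈ Φ : X(h_α) = 0}, L' = H ⊕ ⨁_{α∈Φ'} L_α, and R'' = ⨁_{α∈Φ∖Φ'} L_α. Then the linear map f_X : R'' → L* defined by f_X(Y) = (Z ↦ X([Y, Z])) is injective, and its image is exactly the annihilator {ξ ∈ L* : ξ(Z) = 0 for all Z ∈ L'} of L'; in particular f_X is a linear isomorphism from R'' onto the annihilator of L'. -/
/-- Let `L` be a finite-dimensional semisimple Lie algebra over a field `K` of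
characteristic zero (nondegenerate Killing form), with splitting Cartan subalgebra `H` and root
space decomposition `L = H ⊕ ⨁_{α ∈ Φ} L_α` (here `rs γ` is the `γ`-root space, `rs 0 = H`,
`rs γ = ⊥` for `γ ∉ Φ ∪ {0}`), coroot elements `h_α ∈ [L_α, L_{-α}]` normalized by `α(h_α) = 2`.
Let `X ∈ L*` vanish on every root space `L_α`, `α ∈ Φ`.  Set `Φ' = {α ∈ Φ : X(h_α) = 0}`,
`L' = H ⊕ ⨁_{α ∈ Φ'} L_α` and `R'' = ⨁_{α ∈ Φ∖Φ'} L_α`.  Then the map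
`f_X : R'' → L*`, `Y ↦ (Z ↦ X([Y,Z]))`, is injective, its image lands in the annihilator of
`L'`, and every functional vanishing on `L'` is of the form `f_X(Y)` for some `Y ∈ R''`;
in particular `f_X` is a linear isomorphism of `R''` onto the annihilator of `L'`. -/
theorem fX_isomorphism_onto_annihilator
    {K : Type*} [Field K] [CharZero K]
    {L : Type*} [LieRing L] [LieAlgebra K L] [FiniteDimensional K L]
    [LieAlgebra.IsKilling K L]
    (H : LieSubalgebra K L) [H.IsCartanSubalgebra]
    [DecidableEq (Module.Dual K H)]
    (Φ : Set (Module.Dual K H))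
    (rs : Module.Dual K H → Submodule K L)
    (coroot : Module.Dual K H → H)
    (hΦfin : Φ.Finite)
    (h0 : (0 : Module.Dual K H) ∉ Φ)
    (hneg : ∀ α ∈ Φ, -α ∈ Φ)
    (hrs0 : rs 0 = H.toSubmodule)
    (hrs_bot : ∀ γ : Module.Dual K H, γ ∉ Φ → γ ≠ 0 → rs γ = ⊥)
    (hdecomp : DirectSum.IsInternal rs)
    (hdim : ∀ α ∈ Φ, Module.finrank K ↥(rs α) = 1)
    (hbracket : ∀ α β : Module.Dual K H, ∀ x ∈ rs α, ∀ y ∈ rs β, ⁅x, y⁆ ∈ rs (α + β))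
    (haction : ∀ α ∈ Φ, ∀ h : H, ∀ x ∈ rs α, ⁅(h : L), x⁆ = α h • x)
    (hcoroot_mem : ∀ α ∈ Φ, (coroot α : L) ∈
        Submodule.span K {z : L | ∃ x ∈ rs α, ∃ y ∈ rs (-α), z = ⁅x, y⁆})
    (hcoroot2 : ∀ α ∈ Φ, α (coroot α) = 2)
    (X : Module.Dual K L)
    (hX : ∀ α ∈ Φ, ∀ y ∈ rs α, X y = 0) :
    (∀ Y ∈ ⨆ α ∈ {α ∈ Φ | X (coroot α : L) ≠ 0}, rs α,
        (∀ Z : L, X ⁅Y, Z⁆ = 0) → Y = 0) ∧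
    (∀ Y ∈ ⨆ α ∈ {α ∈ Φ | X (coroot α : L) ≠ 0}, rs α,
        ∀ Z ∈ H.toSubmodule ⊔ (⨆ α ∈ {α ∈ Φ | X (coroot α : L) = 0}, rs α),
          X ⁅Y, Z⁆ = 0) ∧
    (∀ ξ : Module.Dual K L,
        (∀ Z ∈ H.toSubmodule ⊔ (⨆ α ∈ {α ∈ Φ | X (coroot α : L) = 0}, rs α), ξ Z = 0) →
        ∃ Y ∈ ⨆ α ∈ {α ∈ Φ | X (coroot α : L) ≠ 0}, rs α,
          ∀ Z : L, ξ Z = X ⁅Y, Z⁆) := by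

  classical
  set S : Set (Module.Dual K H) := {α ∈ Φ | X (coroot α : L) ≠ 0} with hSdef
  set S' : Set (Module.Dual K H) := {α ∈ Φ | X (coroot α : L) = 0} with hS'def
  -- Key lemma: bases of the 1-dimensional root spaces, with coroot a nonzero multiple of ⁅e,f⁆.
  have key : ∀ α ∈ Φ, ∃ e ∈ rs α, ∃ f ∈ rs (-α),
      (∀ x ∈ rs α, ∃ s : K, x = s • e) ∧ (∀ z ∈ rs (-α), ∃ s : K, z = s • f) ∧
      ∃ d : K, d ≠ 0 ∧ (coroot α : L) = d • ⁅e, f⁆ := by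
    intro α hα
    obtain ⟨e', he'0, he'⟩ := finrank_eq_one_iff'.mp (hdim α hα)
    obtain ⟨f', hf'0, hf'⟩ := finrank_eq_one_iff'.mp (hdim (-α) (hneg α hα))
    have hse : ∀ x ∈ rs α, ∃ s : K, x = s • (e' : L) := by
      intro x hx
      obtain ⟨c, hc⟩ := he' ⟨x, hx⟩
      exact ⟨c, by simpa using congrArg Subtype.val hc.symm⟩
    have hsf : ∀ z ∈ rs (-α), ∃ s : K, z = s • (f' : L) := by
      intro z hz
      obtain ⟨c, hc⟩ := hf' ⟨z, hz⟩
      exact ⟨c, by simpa using congrArg Subtype.val hc.symm⟩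
    refine ⟨e', e'.2, f', f'.2, hse, hsf, ?_⟩
    have hspan : Submodule.span K {z : L | ∃ x ∈ rs α, ∃ y ∈ rs (-α), z = ⁅x, y⁆}
        ≤ Submodule.span K {(⁅(e' : L), (f' : L)⁆ : L)} := by
      rw [Submodule.span_le]
      rintro z ⟨x, hx, y, hy, rfl⟩
      obtain ⟨s, rfl⟩ := hse x hx
      obtain ⟨u, rfl⟩ := hsf y hy
      rw [smul_lie, lie_smul]
      exact Submodule.smul_mem _ _ (Submodule.smul_mem _ _ (Submodule.mem_span_singleton_self _))
    obtain ⟨d, hd⟩ := Submodule.mem_span_singleton.mp (hspan (hcoroot_mem α hα))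
    refine ⟨d, ?_, hd.symm⟩
    rintro rfl
    have hc0 : (coroot α : L) = 0 := by rw [← hd, zero_smul]
    have hc0' : coroot α = 0 := Subtype.coe_injective (by simpa using hc0)
    have h2 := hcoroot2 α hα
    rw [hc0', map_zero] at h2
    exact two_ne_zero h2.symm
  -- coroot (-α) = - coroot α  (as elements of L)
  have hcor_neg : ∀ α ∈ Φ, (coroot (-α) : L) = -(coroot α : L) := by
    intro α hα
    obtain ⟨e, he, f, hf, hse, hsf, d, hd, hcor⟩ := key α hα
    have hmem := hcoroot_mem (-α) (hneg α hα)
    rw [neg_neg] at hmem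
    have hspan : Submodule.span K {z : L | ∃ x ∈ rs (-α), ∃ y ∈ rs α, z = ⁅x, y⁆}
        ≤ Submodule.span K {(⁅e, f⁆ : L)} := by
      rw [Submodule.span_le]
      rintro z ⟨x, hx, y, hy, rfl⟩
      obtain ⟨s, rfl⟩ := hsf x hx
      obtain ⟨u, rfl⟩ := hse y hy
      have hsk : ⁅f, e⁆ = -⁅e, f⁆ := neg_eq_iff_eq_neg.mp (lie_skew e f)
      rw [smul_lie, lie_smul, hsk]
      exact Submodule.smul_mem _ _ (Submodule.smul_mem _ _
        (Submodule.neg_mem _ (Submodule.mem_span_singleton_self _)))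
    obtain ⟨u, hu⟩ := Submodule.mem_span_singleton.mp (hspan hmem)
    have hef : ⁅e, f⁆ = d⁻¹ • (coroot α : L) := by
      rw [hcor, smul_smul, inv_mul_cancel₀ hd, one_smul]
    have huL : (coroot (-α) : L) = (u * d⁻¹) • (coroot α : L) := by
      rw [← hu, hef, smul_smul]
    have huH : coroot (-α) = (u * d⁻¹) • coroot α := by
      exact_mod_cast huL
    have happ : α (coroot (-α)) = (u * d⁻¹) * 2 := by
      rw [huH, map_smul, smul_eq_mul, hcoroot2 α hα]
    have happ2 : α (coroot (-α)) = -2 := by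
      have h2 := hcoroot2 (-α) (hneg α hα)
      rw [LinearMap.neg_apply] at h2
      exact neg_eq_iff_eq_neg.mp h2
    have hu1 : u * d⁻¹ = -1 := by
      have : (u * d⁻¹) * 2 = (-1 : K) * 2 := by rw [← happ, happ2]; ring
      exact mul_right_cancel₀ two_ne_zero this
    rw [huL, hu1, neg_one_smul]
  -- Lemma B : brackets with non-opposite root spaces are killed by X
  have hB : ∀ α ∈ Φ, ∀ x ∈ rs α, ∀ γ : Module.Dual K H, γ ≠ -α → ∀ z ∈ rs γ,
      X ⁅x, z⁆ = 0 := by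
    intro α hα x hx γ hγ z hz
    have hm := hbracket α γ x hx z hz
    by_cases h1 : α + γ ∈ Φ
    · exact hX _ h1 _ hm
    · have h2 : α + γ ≠ 0 := by
        intro h
        exact hγ (neg_eq_of_add_eq_zero_right h).symm
      rw [hrs_bot _ h1 h2, Submodule.mem_bot] at hm
      rw [hm, map_zero]
  -- auxiliary linear maps
  let G : L → Module.Dual K L := fun z =>
    { toFun := fun Y => X ⁅Y, z⁆
      map_add' := fun a b => by
        show X ⁅a + b, z⁆ = X ⁅a, z⁆ + X ⁅b, z⁆
        rw [add_lie, map_add]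
      map_smul' := fun c a => by
        show X ⁅c • a, z⁆ = c • X ⁅a, z⁆
        rw [smul_lie, map_smul] }
  have hG : ∀ z Y, G z Y = X ⁅Y, z⁆ := fun _ _ => rfl
  let G' : L → Module.Dual K L := fun Y =>
    { toFun := fun z => X ⁅Y, z⁆
      map_add' := fun a b => by
        show X ⁅Y, a + b⁆ = X ⁅Y, a⁆ + X ⁅Y, b⁆
        rw [lie_add, map_add]
      map_smul' := fun c a => by
        show X ⁅Y, c • a⁆ = c • X ⁅Y, a⁆
        rw [lie_smul, map_smul] }
  have hG' : ∀ Y z, G' Y z = X ⁅Y, z⁆ := fun _ _ => rfl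
  -- finiteness
  have hfinS : S.Finite := hΦfin.subset fun a ha => ha.1
  set t := hfinS.toFinset with ht
  have hmemt : ∀ α, α ∈ t ↔ α ∈ S := fun α => hfinS.mem_toFinset
  have hiSup_eq : (⨆ α ∈ S, rs α) = ⨆ α ∈ t, rs α :=
    le_antisymm (iSup₂_le fun α hα => le_iSup₂ (f := fun α _ => rs α) α ((hmemt α).mpr hα))
      (iSup₂_le fun α hα => le_iSup₂ (f := fun α _ => rs α) α ((hmemt α).mp hα))
  -- Part 2 core
  have hP2core : ∀ γ : Module.Dual K H, (γ = 0 ∨ γ ∈ S') → ∀ z ∈ rs γ,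
      ∀ Y ∈ ⨆ α ∈ S, rs α, X ⁅Y, z⁆ = 0 := by
    intro γ hγ z hz Y hY
    have hle : (⨆ α ∈ S, rs α) ≤ LinearMap.ker (G z) := by
      refine iSup₂_le fun α hα => fun x hx => ?_
      rw [LinearMap.mem_ker, hG]
      have hαΦ : α ∈ Φ := hα.1
      rcases hγ with rfl | hγ'
      · refine hB α hαΦ x hx 0 ?_ z hz
        intro h
        have hαz : α = 0 := by rw [← neg_neg α, ← h, neg_zero]
        exact h0 (hαz ▸ hαΦ)
      · refine hB α hαΦ x hx γ ?_ z hz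
        rintro rfl
        apply hα.2
        have h' := hγ'.2
        rw [hcor_neg α hαΦ] at h'
        simpa using h'
    have := hle hY
    rw [LinearMap.mem_ker, hG] at this
    exact this
  -- Part 2
  have hP2 : ∀ Y ∈ ⨆ α ∈ S, rs α, ∀ Z ∈ H.toSubmodule ⊔ ⨆ α ∈ S', rs α, X ⁅Y, Z⁆ = 0 := by
    intro Y hY Z hZ
    obtain ⟨h, hh, z, hz, rfl⟩ := Submodule.mem_sup.mp hZ
    have h1 : X ⁅Y, h⁆ = 0 := hP2core 0 (Or.inl rfl) h (by rw [hrs0]; exact hh) Y hY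
    have h2 : X ⁅Y, z⁆ = 0 := by
      have hle : (⨆ β ∈ S', rs β) ≤ LinearMap.ker (G' Y) := by
        refine iSup₂_le fun β hβ => fun w hw => ?_
        rw [LinearMap.mem_ker, hG']
        exact hP2core β (Or.inr hβ) w hw Y hY
      have := hle hz
      rw [LinearMap.mem_ker, hG'] at this
      exact this
    rw [lie_add, map_add, h1, h2, add_zero]
  -- Part 1 : injectivity
  have part1 : ∀ Y ∈ ⨆ α ∈ S, rs α, (∀ Z : L, X ⁅Y, Z⁆ = 0) → Y = 0 := by
    intro Y hY hZero
    rw [hiSup_eq] at hY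
    obtain ⟨μ, hμ⟩ := (Submodule.mem_iSup_finset_iff_exists_sum _ _).mp hY
    have hzero : ∀ α ∈ t, ((μ α : L) = 0) := by
      intro α hαt
      have hαS : α ∈ S := (hmemt α).mp hαt
      obtain ⟨e, he, f, hf, hse, hsf, d, hd, hcor⟩ := key α hαS.1
      obtain ⟨s, hs⟩ := hse (μ α) (μ α).2
      have hsum : X ⁅Y, f⁆ = ∑ β ∈ t, X ⁅(μ β : L), f⁆ := by
        rw [← hG f Y, ← hμ, map_sum]
        rfl
      have hsingle : ∑ β ∈ t, X ⁅(μ β : L), f⁆ = X ⁅(μ α : L), f⁆ := by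
        refine Finset.sum_eq_single_of_mem α hαt fun β hβ hne => ?_
        refine hB β ((hmemt β).mp hβ).1 _ (μ β).2 (-α) ?_ f hf
        intro hcon
        exact hne (neg_injective hcon).symm
      have hμα : X ⁅(μ α : L), f⁆ = 0 := by rw [← hsingle, ← hsum]; exact hZero f
      have hef : X ⁅e, f⁆ ≠ 0 := by
        intro hc
        apply hαS.2
        rw [hcor, map_smul, smul_eq_mul, hc, mul_zero]
      have hcomp : X ⁅(μ α : L), f⁆ = s * X ⁅e, f⁆ := by
        rw [hs, smul_lie, map_smul, smul_eq_mul]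
      have hs0 : s = 0 := by
        have h' : s * X ⁅e, f⁆ = 0 := by rw [← hcomp]; exact hμα
        exact (mul_eq_zero.mp h').resolve_right hef
      rw [hs, hs0, zero_smul]
    rw [← hμ]
    exact Finset.sum_eq_zero hzero
  -- Part 3 : surjectivity onto the annihilator
  have part3 : ∀ ξ : Module.Dual K L,
      (∀ Z ∈ H.toSubmodule ⊔ ⨆ α ∈ S', rs α, ξ Z = 0) →
      ∃ Y ∈ ⨆ α ∈ S, rs α, ∀ Z : L, ξ Z = X ⁅Y, Z⁆ := by
    intro ξ hξ
    have hchoice : ∀ α ∈ S, ∃ y ∈ rs α, ∀ z ∈ rs (-α), X ⁅y, z⁆ = ξ z := by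
      intro α hα
      obtain ⟨e, he, f, hf, hse, hsf, d, hd, hcor⟩ := key α hα.1
      have hXc : X (coroot α : L) ≠ 0 := hα.2
      have hef : X ⁅e, f⁆ = d⁻¹ * X (coroot α : L) := by
        rw [hcor, map_smul, smul_eq_mul, ← mul_assoc, inv_mul_cancel₀ hd, one_mul]
      refine ⟨(d * (X (coroot α : L))⁻¹ * ξ f) • e, Submodule.smul_mem _ _ he, ?_⟩
      intro z hz
      obtain ⟨s, rfl⟩ := hsf z hz
      rw [smul_lie, lie_smul, map_smul, map_smul, smul_eq_mul, smul_eq_mul, map_smul,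
        smul_eq_mul, hef]
      field_simp
    choose! y hy1 hy2 using hchoice
    refine ⟨∑ α ∈ t, y α, ?_, ?_⟩
    · refine Submodule.sum_mem _ fun α hα => ?_
      exact (le_iSup₂ (f := fun α _ => rs α) α ((hmemt α).mp hα)) (hy1 α ((hmemt α).mp hα))
    · set Y := ∑ α ∈ t, y α with hYdef
      have hper : ∀ γ : Module.Dual K H, ∀ z ∈ rs γ, ξ z = X ⁅Y, z⁆ := by
        intro γ z hz
        have hsum : X ⁅Y, z⁆ = ∑ α ∈ t, X ⁅y α, z⁆ := by
          rw [← hG z Y, hYdef, map_sum]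
          rfl
        by_cases hγΦ : γ ∈ Φ
        · by_cases hγX : X (coroot γ : L) = 0
          · have hz' : z ∈ H.toSubmodule ⊔ ⨆ α ∈ S', rs α :=
              Submodule.mem_sup_right ((le_iSup₂ (f := fun α _ => rs α) γ ⟨hγΦ, hγX⟩) hz)
            rw [hξ z hz', hsum]
            symm
            refine Finset.sum_eq_zero fun α hαt => ?_
            have hαS := (hmemt α).mp hαt
            refine hB α hαS.1 _ (hy1 α hαS) γ ?_ z hz
            rintro rfl
            apply hαS.2
            have h' := hγX
            rw [hcor_neg α hαS.1] at h'
            simpa using h'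
          · have hα₀S : -γ ∈ S := by
              refine ⟨hneg γ hγΦ, ?_⟩
              rw [hcor_neg γ hγΦ]
              simpa using hγX
            have hsingle : ∑ α ∈ t, X ⁅y α, z⁆ = X ⁅y (-γ), z⁆ := by
              refine Finset.sum_eq_single_of_mem (-γ) ((hmemt _).mpr hα₀S) fun β hβt hne => ?_
              refine hB β ((hmemt β).mp hβt).1 _ (hy1 β ((hmemt β).mp hβt)) γ ?_ z hz
              rintro rfl
              exact hne (neg_neg β).symm
            rw [hsum, hsingle]
            exact (hy2 (-γ) hα₀S z (by rwa [neg_neg])).symm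
        · by_cases hγ0 : γ = 0
          · subst hγ0
            have hz' : z ∈ H.toSubmodule ⊔ ⨆ α ∈ S', rs α :=
              Submodule.mem_sup_left (by rwa [← hrs0])
            rw [hξ z hz', hsum]
            symm
            refine Finset.sum_eq_zero fun α hαt => ?_
            have hαS := (hmemt α).mp hαt
            refine hB α hαS.1 _ (hy1 α hαS) 0 ?_ z hz
            intro hcon
            have hαz : α = 0 := by rw [← neg_neg α, ← hcon, neg_zero]
            exact h0 (hαz ▸ hαS.1)
          · have hbot : rs γ = ⊥ := hrs_bot γ hγΦ hγ0
            rw [hbot, Submodule.mem_bot] at hz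
            rw [hz, lie_zero, map_zero, map_zero]
      intro Z
      have hZtop : Z ∈ ⨆ γ, rs γ := by
        rw [hdecomp.submodule_iSup_eq_top]
        trivial
      have hle : (⨆ γ, rs γ) ≤ LinearMap.ker (ξ - G' Y) := by
        refine iSup_le fun γ => fun z hz => ?_
        rw [LinearMap.mem_ker, LinearMap.sub_apply, hG', sub_eq_zero]
        exact hper γ z hz
      have := hle hZtop
      rw [LinearMap.mem_ker, LinearMap.sub_apply, hG', sub_eq_zero] at this
      exact this
  exact ⟨part1, hP2, part3⟩
end
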